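/- arXiv:1706.05986 — 10 statements merged into one kernel-verified Lean document; each statement's English description precedes it below -/
import Mathlib

section
/- Let a ∈ ℝ, let b ∈ (a, +∞], let ε, ε̃ ∈ {1, -1}, and let q : [a, b) → ℝ be continuously differentiable with q(a) = 0, q(s) ≠ 0 for every s ∈ (a, b), and ε̃·q'(a) ≥ 0. Define h : (a, b) → ℝ by h(s) = 1/q(s). Then there exists δ > 0 and a function w : [a, a+δ) → ℝ, continuous on [a, a+δ) and differentiable on (a, a+δ), such that w(a) = 0 and w'(s) = (ε̃ + ε·w(s)²)·(1 − w(s)·h(s)) for every s ∈ (a, a+δ). -/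
/-!
Writing `w = q v`, the equation reads `w' + (ε' / q) w = F(v)` with
`F(v) = ε' + ε q² v² (1 - v)`, so with the integrating factor `μ = exp ∫ ε' / q` a solution is a
bounded continuous fixed point `v = (q μ)⁻¹ ∫_c^s μ F(v)` on `(a, s₀)`.

Near `a` we have `|q| ≤ 1/12` and, by continuity of `q'` and `ε' q'(a) ≥ 0`, `ε' q' ≥ -1/2`.
The latter makes `2 ε' q μ - ∫ μ` nondecreasing, which yields `|∫_c^s μ| ≤ 2 |q s| μ s`: with
`c = a` when `ε' q > 0` (then `μ` increases, so it is integrable at `a`), and with `c = s₀` when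
`ε' q < 0`. With `v` truncated at `±3` in `F`, the operator is therefore a contraction whose
values are bounded by `5/2`, so the truncation is inactive at the fixed point; and `w = q v`
tends to `0` at `a`.
-/

open Set Filter Topology MeasureTheory intervalIntegral BoundedContinuousFunction

namespace SingularODE

lemma _root_.IsPreconnected.forall_pos_or_forall_neg {X : Type*} [TopologicalSpace X]
    {s : Set X} {f : X → ℝ} (hs : IsPreconnected s) (hf : ContinuousOn f s)
    (h0 : ∀ x ∈ s, f x ≠ 0) : (∀ x ∈ s, 0 < f x) ∨ (∀ x ∈ s, f x < 0) := by
  by_contra! h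
  obtain ⟨⟨x, hx, hfx⟩, ⟨y, hy, hfy⟩⟩ := h
  obtain ⟨z, hz, hfz⟩ := hs.intermediate_value hx hy hf ⟨hfx, hfy⟩
  exact h0 z hz hfz

lemma continuousOn_extend_val {α β : Type*} [TopologicalSpace α] [TopologicalSpace β] [Zero β]
    {s : Set α} (v : C(s, β)) : ContinuousOn (Function.extend Subtype.val v 0) s := by
  rw [continuousOn_iff_continuous_domRestrict]
  convert v.continuous using 1
  funext x
  exact Subtype.val_injective.extend_apply _ _ x

lemma abs_extend_val_sub_le_dist {α : Type*} [TopologicalSpace α] {s : Set α} (u v : s →ᵇ ℝ)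
    (t : α) :
    |Function.extend Subtype.val u 0 t - Function.extend Subtype.val v 0 t| ≤ dist u v := by
  by_cases ht : t ∈ s
  · rw [show t = (⟨t, ht⟩ : s).val from rfl, Subtype.val_injective.extend_apply,
      Subtype.val_injective.extend_apply, ← Real.dist_eq]
    exact dist_coe_le_dist _
  · have hne : ¬∃ x : s, x.val = t := fun ⟨x, hx⟩ => ht (hx ▸ x.2)
    rw [Function.extend_apply' _ _ _ hne, Function.extend_apply' _ _ _ hne, sub_self, abs_zero]
    exact dist_nonneg

lemma continuousOn_Ico_mul_of_tendsto_zero {a s₀ K : ℝ} {q v : ℝ → ℝ} (hqa : q a = 0)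
    (hq : Tendsto q (𝓝[>] a) (𝓝 0)) (hvK : ∀ s ∈ Ioo a s₀, |v s| ≤ K)
    (hqv : ContinuousOn (fun t => q t * v t) (Ioo a s₀)) :
    ContinuousOn (fun t => q t * v t) (Ico a s₀) := by
  intro t ht
  rcases ht.1.eq_or_lt with rfl | hat
  · rw [← Ioo_insert_left ht.2, continuousWithinAt_insert_self, ContinuousWithinAt, hqa,
      zero_mul]
    have hqK : Tendsto (fun t => K * |q t|) (𝓝[Ioo a s₀] a) (𝓝 0) := by
      simpa using (hq.mono_left (nhdsWithin_mono _ Ioo_subset_Ioi_self)).abs.const_mul K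
    refine squeeze_zero_norm' ?_ hqK
    filter_upwards [self_mem_nhdsWithin] with x hx
    rw [Real.norm_eq_abs, abs_mul, mul_comm]
    exact mul_le_mul_of_nonneg_right (hvK x hx) (abs_nonneg _)
  · exact (hqv t ⟨hat, ht.2⟩).mono_of_mem_nhdsWithin
      (mem_nhdsWithin_of_mem_nhds (Ioo_mem_nhds hat ht.2))

lemma intervalIntegrable_of_monotoneOn {a b s : ℝ} {μ : ℝ → ℝ} (hμ : ContinuousOn μ (Ioo a b))
    (hmono : MonotoneOn μ (Ioo a b)) (hμ0 : ∀ t ∈ Ioo a b, 0 ≤ μ t) (hs : s ∈ Ioo a b) :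
    IntervalIntegrable μ volume a s := by
  have hsub : Ioc a s ⊆ Ioo a b := Ioc_subset_Ioo_right hs.2
  rw [intervalIntegrable_iff_integrableOn_Ioc_of_le hs.1.le]
  refine IntegrableOn.of_bound measure_Ioc_lt_top
    ((hμ.mono hsub).aestronglyMeasurable measurableSet_Ioc) (μ s)
    ((ae_restrict_iff' measurableSet_Ioc).2 (ae_of_all _ fun t ht => ?_))
  rw [Real.norm_eq_abs, abs_of_nonneg (hμ0 t (hsub ht))]
  exact hmono (hsub ht) hs ht.2

def truncate (V : ℝ) : ℝ := max (min V 3) (-3)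

lemma abs_truncate_le (V : ℝ) : |truncate V| ≤ 3 :=
  abs_le.2 ⟨le_max_right _ _, max_le (min_le_right _ _) (by norm_num)⟩

lemma truncate_of_abs_le {V : ℝ} (hV : |V| ≤ 3) : truncate V = V := by
  rw [truncate, min_eq_left (abs_le.1 hV).2, max_eq_left (abs_le.1 hV).1]

lemma abs_truncate_sub_le (V V' : ℝ) : |truncate V - truncate V'| ≤ |V - V'| :=
  (abs_max_sub_max_le_abs _ _ _).trans (by
    simpa [abs_sub_comm] using abs_min_sub_min_le_max V 3 V' 3)

lemma continuous_truncate : Continuous truncate :=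
  (continuous_id.min continuous_const).max continuous_const

lemma abs_cubic_le {V : ℝ} (hV : |V| ≤ 3) : |V ^ 2 * (1 - V)| ≤ 36 := by
  rw [abs_mul, abs_pow]
  have h1 : |1 - V| ≤ 4 := (abs_sub _ _).trans (by rw [abs_one]; linarith)
  have h2 : |V| ^ 2 ≤ 9 := by nlinarith [abs_nonneg V]
  nlinarith [abs_nonneg (1 - V), sq_nonneg |V|]

lemma abs_cubic_sub_le {V V' : ℝ} (hV : |V| ≤ 3) (hV' : |V'| ≤ 3) :
    |V ^ 2 * (1 - V) - V' ^ 2 * (1 - V')| ≤ 33 * |V - V'| := by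
  have hfactor : V ^ 2 * (1 - V) - V' ^ 2 * (1 - V') =
      (V - V') * ((V + V') - (V ^ 2 + V * V' + V' ^ 2)) := by ring
  have hbound : |(V + V') - (V ^ 2 + V * V' + V' ^ 2)| ≤ 33 := by
    obtain ⟨h1, h2⟩ := abs_le.1 hV
    obtain ⟨h3, h4⟩ := abs_le.1 hV'
    rw [abs_le]; constructor <;> nlinarith
  rw [hfactor, abs_mul, mul_comm]
  exact mul_le_mul_of_nonneg_right hbound (abs_nonneg _)

/-- `F(v)` from `w' + (ε' / q) w = F(v)` for `w = q v`, with `v` truncated at `±3` so that it is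
globally Lipschitz in `v`. -/
def truncatedNonlinearity (ε ε' : ℝ) (q : ℝ → ℝ) (t V : ℝ) : ℝ :=
  ε' + ε * q t ^ 2 * (truncate V ^ 2 * (1 - truncate V))

section TruncatedNonlinearity

variable {ε ε' : ℝ} {q : ℝ → ℝ} {t : ℝ}

lemma abs_truncatedNonlinearity_le (hε : |ε| ≤ 1) (hε' : |ε'| ≤ 1) (hq : |q t| ≤ 1 / 12)
    (V : ℝ) : |truncatedNonlinearity ε ε' q t V| ≤ 5 / 4 := by
  have hq2 : q t ^ 2 ≤ 1 / 144 := by nlinarith [abs_nonneg (q t), sq_abs (q t)]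
  have hcubic : |ε * q t ^ 2 * (truncate V ^ 2 * (1 - truncate V))| ≤ 1 / 4 := by
    rw [abs_mul, abs_mul, abs_of_nonneg (sq_nonneg (q t))]
    have := abs_cubic_le (abs_truncate_le V)
    have := mul_le_mul hε hq2 (sq_nonneg _) zero_le_one
    nlinarith [abs_nonneg ε, abs_nonneg (truncate V ^ 2 * (1 - truncate V))]
  exact (abs_add_le _ _).trans (by linarith)

lemma abs_truncatedNonlinearity_sub_le (hε : |ε| ≤ 1) (hq : |q t| ≤ 1 / 12) (V V' : ℝ) :
    |truncatedNonlinearity ε ε' q t V - truncatedNonlinearity ε ε' q t V'| ≤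
      33 / 144 * |V - V'| := by
  have hcubic := (abs_cubic_sub_le (abs_truncate_le V) (abs_truncate_le V')).trans
    (mul_le_mul_of_nonneg_left (abs_truncate_sub_le V V') (by norm_num))
  have hεq : |ε * q t ^ 2| ≤ 1 / 144 := by
    rw [abs_mul, abs_of_nonneg (sq_nonneg (q t))]
    nlinarith [abs_nonneg ε, sq_nonneg (q t), abs_nonneg (q t), sq_abs (q t)]
  calc |truncatedNonlinearity ε ε' q t V - truncatedNonlinearity ε ε' q t V'|
      = |ε * q t ^ 2| *
          |truncate V ^ 2 * (1 - truncate V) - truncate V' ^ 2 * (1 - truncate V')| := by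
        rw [truncatedNonlinearity, truncatedNonlinearity, ← abs_mul]; ring_nf
    _ ≤ 1 / 144 * (33 * |V - V'|) := mul_le_mul hεq hcubic (abs_nonneg _) (by norm_num)
    _ = 33 / 144 * |V - V'| := by ring

lemma continuousOn_truncatedNonlinearity {s : Set ℝ} (hq : ContinuousOn q s) :
    ContinuousOn (Function.uncurry (truncatedNonlinearity ε ε' q)) (s ×ˢ univ) := by
  have hT : Continuous fun p : ℝ × ℝ => truncate p.2 := continuous_truncate.comp continuous_snd
  exact continuousOn_const.add (((continuousOn_const.mul
    ((hq.comp continuousOn_fst fun p hp => hp.1).pow 2)).mul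
    ((hT.pow 2).mul (continuous_const.sub hT)).continuousOn))

end TruncatedNonlinearity

/-- `μ` is an admissible weight for `q` on `(a, s₀)` with base point `c`: the estimate
`|∫_c^s μ| ≤ 2 |q s| μ s` is what makes `f ↦ (q μ)⁻¹ ∫_c^· μ f` bounded by twice the sup norm,
although `(q μ)⁻¹` blows up at `a`. -/
structure IsAdmissibleWeight (q μ : ℝ → ℝ) (a s₀ c : ℝ) : Prop where
  base_mem : c ∈ Icc a s₀
  pos : ∀ t ∈ Ioc a s₀, 0 < μ t
  intervalIntegrable : ∀ s ∈ Ioo a s₀, IntervalIntegrable μ volume c s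
  abs_integral_le : ∀ s ∈ Ioo a s₀, |∫ t in c..s, μ t| ≤ 2 * |q s| * μ s

noncomputable def integralOperator (q μ : ℝ → ℝ) (c : ℝ) (f : ℝ → ℝ) (s : ℝ) : ℝ :=
  (q s * μ s)⁻¹ * ∫ t in c..s, μ t * f t

namespace IsAdmissibleWeight

variable {q μ f g : ℝ → ℝ} {a s₀ c s K K' : ℝ}

lemma uIoc_subset (hW : IsAdmissibleWeight q μ a s₀ c) (hs : s ∈ Ioo a s₀) :
    uIoc c s ⊆ Ioc a s₀ :=
  Ioc_subset_Ioc (le_min hW.base_mem.1 hs.1.le) (max_le hW.base_mem.2 hs.2.le)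

lemma aestronglyMeasurable (hW : IsAdmissibleWeight q μ a s₀ c)
    (hf : ContinuousOn f (Ioo a s₀)) (hs : s ∈ Ioo a s₀) :
    AEStronglyMeasurable f (volume.restrict (uIoc c s)) := by
  refine (hf.aestronglyMeasurable (μ := volume) measurableSet_Ioo).mono_measure ?_
  rw [Measure.restrict_congr_set Ioo_ae_eq_Ioc]
  exact Measure.restrict_mono (hW.uIoc_subset hs) le_rfl

lemma intervalIntegrable_mul (hW : IsAdmissibleWeight q μ a s₀ c)
    (hf : ContinuousOn f (Ioo a s₀)) (hfK : ∀ t ∈ Ioc a s₀, |f t| ≤ K) (hs : s ∈ Ioo a s₀) :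
    IntervalIntegrable (fun t => μ t * f t) volume c s := by
  refine intervalIntegrable_iff.2 ((intervalIntegrable_iff.1 (hW.intervalIntegrable s hs)).mul_bdd
    (c := K) (hW.aestronglyMeasurable hf hs) ?_)
  exact (ae_restrict_iff' measurableSet_uIoc).2
    (ae_of_all _ fun t ht => hfK t (hW.uIoc_subset hs ht))

lemma abs_integral_mul_le (hW : IsAdmissibleWeight q μ a s₀ c)
    (hfK : ∀ t ∈ Ioc a s₀, |f t| ≤ K) (hs : s ∈ Ioo a s₀) :
    |∫ t in c..s, μ t * f t| ≤ K * (2 * |q s| * μ s) := by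
  have hK : 0 ≤ K := (abs_nonneg _).trans (hfK s ⟨hs.1, hs.2.le⟩)
  have hle : ∀ᵐ t ∂volume.restrict (uIoc c s), ‖μ t * f t‖ ≤ K * μ t := by
    refine (ae_restrict_iff' measurableSet_uIoc).2 (ae_of_all _ fun t ht => ?_)
    have htI := hW.uIoc_subset hs ht
    rw [Real.norm_eq_abs, abs_mul, abs_of_pos (hW.pos t htI), mul_comm K]
    exact mul_le_mul_of_nonneg_left (hfK t htI) (hW.pos t htI).le
  calc |∫ t in c..s, μ t * f t|
      ≤ |∫ t in c..s, K * μ t| := (Real.norm_eq_abs _).symm.trans_le <|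
        norm_integral_le_abs_of_norm_le hle ((hW.intervalIntegrable s hs).const_mul K)
    _ = K * |∫ t in c..s, μ t| := by
        rw [intervalIntegral.integral_const_mul, abs_mul, abs_of_nonneg hK]
    _ ≤ K * (2 * |q s| * μ s) := mul_le_mul_of_nonneg_left (hW.abs_integral_le s hs) hK

lemma abs_integralOperator_le (hW : IsAdmissibleWeight q μ a s₀ c) (hq : q s ≠ 0)
    (hfK : ∀ t ∈ Ioc a s₀, |f t| ≤ K) (hs : s ∈ Ioo a s₀) :
    |integralOperator q μ c f s| ≤ 2 * K := by
  have hμ := hW.pos s ⟨hs.1, hs.2.le⟩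
  rw [integralOperator, abs_mul, abs_inv, abs_mul, abs_of_pos hμ,
    inv_mul_le_iff₀ (mul_pos (abs_pos.2 hq) hμ)]
  linarith [hW.abs_integral_mul_le hfK hs]

lemma hasDerivAt_integral_mul (hW : IsAdmissibleWeight q μ a s₀ c)
    (hμ : ContinuousOn μ (Ioo a s₀)) (hf : ContinuousOn f (Ioo a s₀))
    (hfK : ∀ t ∈ Ioc a s₀, |f t| ≤ K) (hs : s ∈ Ioo a s₀) :
    HasDerivAt (fun x => ∫ t in c..x, μ t * f t) (μ s * f s) s :=
  integral_hasDerivAt_right (hW.intervalIntegrable_mul hf hfK hs)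
    ((hμ.mul hf).stronglyMeasurableAtFilter isOpen_Ioo s hs)
    ((hμ.mul hf).continuousAt (isOpen_Ioo.mem_nhds hs))

lemma continuousOn_integralOperator (hW : IsAdmissibleWeight q μ a s₀ c)
    (hμ : ContinuousOn μ (Ioo a s₀)) (hq : ContinuousOn q (Ioo a s₀))
    (hq0 : ∀ s ∈ Ioo a s₀, q s ≠ 0) (hf : ContinuousOn f (Ioo a s₀))
    (hfK : ∀ t ∈ Ioc a s₀, |f t| ≤ K) :
    ContinuousOn (integralOperator q μ c f) (Ioo a s₀) :=
  ((hq.mul hμ).inv₀ fun s hs => mul_ne_zero (hq0 s hs) (hW.pos s ⟨hs.1, hs.2.le⟩).ne').mul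
    fun _ hs => (hW.hasDerivAt_integral_mul hμ hf hfK hs).continuousAt.continuousWithinAt

lemma integralOperator_sub (hW : IsAdmissibleWeight q μ a s₀ c)
    (hf : ContinuousOn f (Ioo a s₀)) (hfK : ∀ t ∈ Ioc a s₀, |f t| ≤ K)
    (hg : ContinuousOn g (Ioo a s₀)) (hgK : ∀ t ∈ Ioc a s₀, |g t| ≤ K') (hs : s ∈ Ioo a s₀) :
    integralOperator q μ c f s - integralOperator q μ c g s =
      integralOperator q μ c (fun t => f t - g t) s := by
  simp only [integralOperator, ← mul_sub,
    ← integral_sub (hW.intervalIntegrable_mul hf hfK hs) (hW.intervalIntegrable_mul hg hgK hs)]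

theorem exists_eq_integralOperator (hW : IsAdmissibleWeight q μ a s₀ c)
    (hμ : ContinuousOn μ (Ioo a s₀)) (hq : ContinuousOn q (Ioo a s₀))
    (hq0 : ∀ s ∈ Ioo a s₀, q s ≠ 0) {G : ℝ → ℝ → ℝ} {M L : ℝ}
    (hG : ContinuousOn (Function.uncurry G) (Ioo a s₀ ×ˢ univ))
    (hGM : ∀ t ∈ Ioc a s₀, ∀ V, |G t V| ≤ M)
    (hGL : ∀ t ∈ Ioc a s₀, ∀ V V', |G t V - G t V'| ≤ L * |V - V'|) (hL0 : 0 ≤ L)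
    (hL : 2 * L < 1) :
    ∃ v : ℝ → ℝ, ContinuousOn v (Ioo a s₀) ∧
      ∀ s ∈ Ioo a s₀, v s = integralOperator q μ c (fun t => G t (v t)) s := by
  let ext (v : Ioo a s₀ →ᵇ ℝ) : ℝ → ℝ := Function.extend Subtype.val v 0
  have hcont (v : Ioo a s₀ →ᵇ ℝ) : ContinuousOn (fun t => G t (ext v t)) (Ioo a s₀) :=
    hG.comp (continuousOn_id.prodMk (continuousOn_extend_val v.toContinuousMap))
      fun t ht => ⟨ht, mem_univ _⟩
  have hbdd (v : Ioo a s₀ →ᵇ ℝ) : ∀ t ∈ Ioc a s₀, |G t (ext v t)| ≤ M := fun t ht => hGM t ht _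
  let T (v : Ioo a s₀ →ᵇ ℝ) : Ioo a s₀ →ᵇ ℝ :=
    ofNormedAddCommGroup ((Ioo a s₀).domRestrict (integralOperator q μ c fun t => G t (ext v t)))
      (hW.continuousOn_integralOperator hμ hq hq0 (hcont v) (hbdd v)).domRestrict (2 * M)
      fun s => hW.abs_integralOperator_le (hq0 s s.2) (hbdd v) s.2
  have hT : ContractingWith (2 * L).toNNReal T := by
    refine ⟨by simpa using hL, LipschitzWith.of_dist_le_mul fun u v => ?_⟩
    rw [Real.coe_toNNReal _ (by positivity)]
    refine (dist_le (by positivity)).2 fun s => ?_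
    have hdiff : ∀ t ∈ Ioc a s₀, |G t (ext u t) - G t (ext v t)| ≤ L * dist u v := fun t ht =>
      (hGL t ht _ _).trans (mul_le_mul_of_nonneg_left (abs_extend_val_sub_le_dist u v t) hL0)
    calc dist (T u s) (T v s)
        = |integralOperator q μ c (fun t => G t (ext u t) - G t (ext v t)) s| := by
          rw [Real.dist_eq, ← hW.integralOperator_sub (hcont u) (hbdd u) (hcont v) (hbdd v) s.2]
          rfl
      _ ≤ 2 * (L * dist u v) := hW.abs_integralOperator_le (hq0 s s.2) hdiff s.2
      _ = 2 * L * dist u v := by ring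
  set v := ContractingWith.fixedPoint T hT
  refine ⟨ext v, continuousOn_extend_val v.toContinuousMap, fun s hs => ?_⟩
  calc ext v s = v ⟨s, hs⟩ := Subtype.val_injective.extend_apply _ _ ⟨s, hs⟩
    _ = T v ⟨s, hs⟩ := by rw [hT.fixedPoint_isFixedPt]
    _ = _ := rfl

theorem hasDerivAt_mul_of_eq_integralOperator (hW : IsAdmissibleWeight q μ a s₀ c)
    {p v : ℝ → ℝ} (hμ : ∀ s ∈ Ioo a s₀, HasDerivAt μ (μ s * p s) s)
    (hq0 : ∀ s ∈ Ioo a s₀, q s ≠ 0) (hf : ContinuousOn f (Ioo a s₀))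
    (hfK : ∀ t ∈ Ioc a s₀, |f t| ≤ K) (hv : ∀ s ∈ Ioo a s₀, v s = integralOperator q μ c f s)
    (hs : s ∈ Ioo a s₀) : HasDerivAt (fun t => q t * v t) (f s - p s * (q s * v s)) s := by
  have hμc : ContinuousOn μ (Ioo a s₀) := fun t ht => (hμ t ht).continuousAt.continuousWithinAt
  have hμs : μ s ≠ 0 := (hW.pos s ⟨hs.1, hs.2.le⟩).ne'
  have hquot := (hW.hasDerivAt_integral_mul hμc hf hfK hs).div (hμ s hs) hμs
  have heq : (fun t => q t * v t) =ᶠ[𝓝 s] fun t => (∫ x in c..t, μ x * f x) / μ t := by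
    filter_upwards [isOpen_Ioo.mem_nhds hs] with t ht
    rw [hv t ht, integralOperator]
    field_simp [hq0 t ht, (hW.pos t ⟨ht.1, ht.2.le⟩).ne']
  have hP : ∫ x in c..s, μ x * f x = q s * v s * μ s := by
    rw [hv s hs, integralOperator]
    field_simp [hq0 s hs]
  refine (hquot.congr_of_eventuallyEq heq).congr_deriv ?_
  rw [hP]
  field_simp

end IsAdmissibleWeight

section Weight

variable {a b s₀ ε' : ℝ} {q q' μ : ℝ → ℝ}

lemma hasDerivAt_exp_integral {p : ℝ → ℝ} (hp : ContinuousOn p (Ioo a b)) (hs₀ : s₀ ∈ Ioo a b)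
    {x : ℝ} (hx : x ∈ Ioo a b) :
    HasDerivAt (fun y => Real.exp (∫ t in s₀..y, p t)) (Real.exp (∫ t in s₀..x, p t) * p x) x :=
  (integral_hasDerivAt_right ((hp.mono (ordConnected_Ioo.uIcc_subset hs₀ hx)).intervalIntegrable)
    (hp.stronglyMeasurableAtFilter isOpen_Ioo x hx)
    (hp.continuousAt (isOpen_Ioo.mem_nhds hx))).exp

variable (hε' : |ε'| = 1) (hμ : ∀ x ∈ Ioo a b, HasDerivAt μ (μ x * (ε' / q x)) x)
  (hμpos : ∀ x ∈ Ioo a b, 0 < μ x) (hq : ∀ x ∈ Ioo a b, HasDerivAt q (q' x) x)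
  (hq0 : ∀ x ∈ Ioo a b, q x ≠ 0) (hq' : ∀ x ∈ Ioo a b, -(1 / 2) ≤ ε' * q' x)
  (hs₀ : s₀ ∈ Ioo a b)
include hε' hμ hμpos hq hq0 hq' hs₀

lemma integral_le_two_mul_sub {t s : ℝ} (ht : t ∈ Ioo a b) (hs : s ∈ Ioo a b) (hts : t ≤ s) :
    ∫ x in t..s, μ x ≤ 2 * ε' * q s * μ s - 2 * ε' * q t * μ t := by
  have hμc : ContinuousOn μ (Ioo a b) := fun x hx => (hμ x hx).continuousAt.continuousWithinAt
  have hint (x : ℝ) (hx : x ∈ Ioo a b) : IntervalIntegrable μ volume s₀ x :=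
    (hμc.mono (ordConnected_Ioo.uIcc_subset hs₀ hx)).intervalIntegrable
  have hε'sq : ε' * ε' = 1 := by rw [← sq, ← sq_abs, hε', one_pow]
  have hderiv : ∀ x ∈ Ioo a b, HasDerivAt (fun x => 2 * ε' * q x * μ x - ∫ t in s₀..x, μ t)
      (μ x * (2 * (ε' * q' x) + 1)) x := by
    intro x hx
    have hint := integral_hasDerivAt_right (hint x hx)
      (hμc.stronglyMeasurableAtFilter isOpen_Ioo x hx) (hμc.continuousAt (isOpen_Ioo.mem_nhds hx))
    refine ((((hq x hx).const_mul (2 * ε')).mul (hμ x hx)).sub hint).congr_deriv ?_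
    have hqq : q x * (ε' / q x) = ε' := mul_div_cancel₀ ε' (hq0 x hx)
    linear_combination (2 * ε' * μ x) * hqq + (2 * μ x) * hε'sq
  have hmono : MonotoneOn (fun x => 2 * ε' * q x * μ x - ∫ t in s₀..x, μ t) (Ioo a b) := by
    refine monotoneOn_of_hasDerivWithinAt_nonneg (convex_Ioo a b)
      (f' := fun x => μ x * (2 * (ε' * q' x) + 1))
      (fun x hx => (hderiv x hx).continuousAt.continuousWithinAt) (fun x hx => ?_) fun x hx => ?_
    · rw [interior_Ioo] at hx ⊢; exact (hderiv x hx).hasDerivWithinAt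
    · rw [interior_Ioo] at hx
      exact mul_nonneg (hμpos x hx).le (by linarith [hq' x hx])
  have := hmono ht hs hts
  rw [← integral_interval_sub_left (hint s hs) (hint t ht)]
  linarith

lemma isAdmissibleWeight_of_pos (hpos : ∀ x ∈ Ioo a b, 0 < ε' * q x) :
    IsAdmissibleWeight q μ a s₀ a := by
  have hsub : Ioc a s₀ ⊆ Ioo a b := Ioc_subset_Ioo_right hs₀.2
  have hμc : ContinuousOn μ (Ioo a b) := fun x hx => (hμ x hx).continuousAt.continuousWithinAt
  have hmono : MonotoneOn μ (Ioo a b) := by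
    refine monotoneOn_of_hasDerivWithinAt_nonneg (convex_Ioo a b)
      (f' := fun x => μ x * (ε' / q x)) hμc (fun x hx => ?_) fun x hx => ?_
    · rw [interior_Ioo] at hx ⊢; exact (hμ x hx).hasDerivWithinAt
    · rw [interior_Ioo] at hx
      rw [show ε' / q x = ε' * q x / q x ^ 2 by field_simp [hq0 x hx]]
      exact mul_nonneg (hμpos x hx).le (div_nonneg (hpos x hx).le (sq_nonneg _))
  have hint (s : ℝ) (hs : s ∈ Ioo a s₀) : IntervalIntegrable μ volume a s :=
    intervalIntegrable_of_monotoneOn hμc hmono (fun t ht => (hμpos t ht).le)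
      (hsub ⟨hs.1, hs.2.le⟩)
  refine ⟨left_mem_Icc.2 hs₀.1.le, fun t ht => hμpos t (hsub ht), hint, fun s hs => ?_⟩
  have hsI : s ∈ Ioo a b := hsub ⟨hs.1, hs.2.le⟩
  have hlim : Tendsto (fun t => ∫ x in t..s, μ x) (𝓝[>] a) (𝓝 (∫ x in a..s, μ x)) := by
    have hIcc : IntegrableOn μ (uIcc a s) := by
      rw [uIcc_of_le hs.1.le, integrableOn_Icc_iff_integrableOn_Ioc,
        ← intervalIntegrable_iff_integrableOn_Ioc_of_le hs.1.le]
      exact hint s hs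
    rw [← nhdsWithin_Ioo_eq_nhdsGT hs.1]
    exact ((continuousOn_primitive_interval_left hIcc a left_mem_uIcc).mono
      (Ioo_subset_Icc_self.trans Icc_subset_uIcc)).tendsto
  have hbound : ∀ᶠ t in 𝓝[>] a, |∫ x in t..s, μ x| ≤ 2 * |q s| * μ s := by
    filter_upwards [Ioo_mem_nhdsGT hs.1] with t ht
    have htI : t ∈ Ioo a b := ⟨ht.1, ht.2.trans hsI.2⟩
    have hnonneg : 0 ≤ ∫ x in t..s, μ x := integral_nonneg ht.2.le fun x hx =>
      (hμpos x ⟨ht.1.trans_le hx.1, hx.2.trans_lt hsI.2⟩).le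
    have := integral_le_two_mul_sub hε' hμ hμpos hq hq0 hq' hs₀ htI hsI ht.2.le
    have := mul_pos (hpos t htI) (hμpos t htI)
    have : ε' * q s ≤ |q s| := (le_abs_self _).trans (by rw [abs_mul, hε', one_mul])
    rw [abs_of_nonneg hnonneg]
    nlinarith [hμpos s hsI]
  exact le_of_tendsto hlim.abs hbound

lemma isAdmissibleWeight_of_neg (hneg : ε' * q s₀ < 0) : IsAdmissibleWeight q μ a s₀ s₀ := by
  have hsub : Ioc a s₀ ⊆ Ioo a b := Ioc_subset_Ioo_right hs₀.2
  have hμc : ContinuousOn μ (Ioo a b) := fun x hx => (hμ x hx).continuousAt.continuousWithinAt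
  refine ⟨right_mem_Icc.2 hs₀.1.le, fun t ht => hμpos t (hsub ht), fun s hs =>
    (hμc.mono (ordConnected_Ioo.uIcc_subset hs₀ (hsub ⟨hs.1, hs.2.le⟩))).intervalIntegrable,
    fun s hs => ?_⟩
  have hsI : s ∈ Ioo a b := hsub ⟨hs.1, hs.2.le⟩
  have hnonneg : 0 ≤ ∫ x in s..s₀, μ x := integral_nonneg hs.2.le fun x hx =>
    (hμpos x ⟨hs.1.trans_le hx.1, hx.2.trans_lt hs₀.2⟩).le
  have := integral_le_two_mul_sub hε' hμ hμpos hq hq0 hq' hs₀ hsI hs₀ hs.2.le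
  have := mul_neg_of_neg_of_pos hneg (hμpos s₀ hs₀)
  have : -|q s| ≤ ε' * q s := (neg_le_neg (by rw [abs_mul, hε', one_mul])).trans (neg_abs_le _)
  rw [integral_symm, abs_neg, abs_of_nonneg hnonneg]
  nlinarith [hμpos s hsI]

end Weight

theorem exists_isAdmissibleWeight {a b s₀ ε' : ℝ} {q q' : ℝ → ℝ} (hε' : |ε'| = 1)
    (hq : ∀ x ∈ Ioo a b, HasDerivAt q (q' x) x) (hq0 : ∀ x ∈ Ioo a b, q x ≠ 0)
    (hq' : ∀ x ∈ Ioo a b, -(1 / 2) ≤ ε' * q' x) (hs₀ : s₀ ∈ Ioo a b) :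
    ∃ μ c, IsAdmissibleWeight q μ a s₀ c ∧ ∀ x ∈ Ioo a b, HasDerivAt μ (μ x * (ε' / q x)) x := by
  have hqc : ContinuousOn q (Ioo a b) := fun x hx => (hq x hx).continuousAt.continuousWithinAt
  set μ := fun y => Real.exp (∫ t in s₀..y, ε' / q t)
  have hμ : ∀ x ∈ Ioo a b, HasDerivAt μ (μ x * (ε' / q x)) x := fun x hx =>
    hasDerivAt_exp_integral (continuousOn_const.div hqc hq0) hs₀ hx
  have hμpos : ∀ x ∈ Ioo a b, 0 < μ x := fun x _ => Real.exp_pos _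
  have hε'0 : ε' ≠ 0 := by rintro rfl; simp at hε'
  rcases isPreconnected_Ioo.forall_pos_or_forall_neg (continuousOn_const.mul hqc)
    (fun x hx => mul_ne_zero hε'0 (hq0 x hx)) with hpos | hneg
  · exact ⟨μ, a, isAdmissibleWeight_of_pos hε' hμ hμpos hq hq0 hq' hs₀ hpos, hμ⟩
  · exact ⟨μ, s₀, isAdmissibleWeight_of_neg hε' hμ hμpos hq hq0 hq' hs₀ (hneg s₀ hs₀), hμ⟩

theorem IsAdmissibleWeight.exists_solution {a s₀ c ε ε' : ℝ} {q μ : ℝ → ℝ}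
    (hW : IsAdmissibleWeight q μ a s₀ c) (hμ : ∀ s ∈ Ioo a s₀, HasDerivAt μ (μ s * (ε' / q s)) s)
    (hε : |ε| ≤ 1) (hε' : |ε'| ≤ 1) (hqc : ContinuousOn q (Ioo a s₀))
    (hq0 : ∀ s ∈ Ioo a s₀, q s ≠ 0) (hsmall : ∀ t ∈ Ioc a s₀, |q t| ≤ 1 / 12) (hqa : q a = 0)
    (hq_lim : Tendsto q (𝓝[>] a) (𝓝 0)) :
    ∃ w : ℝ → ℝ, ContinuousOn w (Ico a s₀) ∧ w a = 0 ∧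
      ∀ s ∈ Ioo a s₀, HasDerivAt w ((ε' + ε * w s ^ 2) * (1 - w s * (1 / q s))) s := by
  have hGc := continuousOn_truncatedNonlinearity (ε := ε) (ε' := ε') hqc
  have hGM : ∀ t ∈ Ioc a s₀, ∀ V, |truncatedNonlinearity ε ε' q t V| ≤ 5 / 4 :=
    fun t ht => abs_truncatedNonlinearity_le hε hε' (hsmall t ht)
  obtain ⟨v, hvc, hv⟩ := hW.exists_eq_integralOperator
    (fun s hs => (hμ s hs).continuousAt.continuousWithinAt) hqc hq0 hGc hGM
    (fun t ht => abs_truncatedNonlinearity_sub_le hε (hsmall t ht)) (by norm_num) (by norm_num)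
  have hv3 : ∀ s ∈ Ioo a s₀, |v s| ≤ 3 := fun s hs => by
    rw [hv s hs]
    linarith [hW.abs_integralOperator_le (hq0 s hs) (fun t ht => hGM t ht (v t)) hs]
  have hderiv (s : ℝ) (hs : s ∈ Ioo a s₀) := hW.hasDerivAt_mul_of_eq_integralOperator hμ hq0
    (f := fun t => truncatedNonlinearity ε ε' q t (v t))
    (hGc.comp (continuousOn_id.prodMk hvc) fun t ht => ⟨ht, mem_univ _⟩)
    (fun t ht => hGM t ht (v t)) hv hs
  refine ⟨fun t => q t * v t, continuousOn_Ico_mul_of_tendsto_zero hqa hq_lim hv3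
    fun s hs => (hderiv s hs).continuousAt.continuousWithinAt, by simp [hqa],
    fun s hs => (hderiv s hs).congr_deriv ?_⟩
  rw [truncatedNonlinearity, truncate_of_abs_le (hv3 s hs)]
  field_simp [hq0 s hs]
  ring

theorem exists_solution_of_Ioo {a b ε ε' : ℝ} {q q' : ℝ → ℝ} (hab : a < b) (hε : |ε| ≤ 1)
    (hε' : |ε'| = 1) (hqa : q a = 0) (hq_lim : Tendsto q (𝓝[>] a) (𝓝 0))
    (hq : ∀ x ∈ Ioo a b, HasDerivAt q (q' x) x) (hq0 : ∀ x ∈ Ioo a b, q x ≠ 0)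
    (hsmall : ∀ x ∈ Ioo a b, |q x| ≤ 1 / 12) (hq' : ∀ x ∈ Ioo a b, -(1 / 2) ≤ ε' * q' x) :
    ∃ s₀ ∈ Ioo a b, ∃ w : ℝ → ℝ, ContinuousOn w (Ico a s₀) ∧ w a = 0 ∧
      ∀ s ∈ Ioo a s₀, HasDerivAt w ((ε' + ε * w s ^ 2) * (1 - w s * (1 / q s))) s := by
  have hs₀ : (a + b) / 2 ∈ Ioo a b := ⟨by linarith, by linarith⟩
  have hsub : Ioc a ((a + b) / 2) ⊆ Ioo a b := Ioc_subset_Ioo_right hs₀.2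
  have hsub' : Ioo a ((a + b) / 2) ⊆ Ioo a b := Ioo_subset_Ioc_self.trans hsub
  obtain ⟨μ, c, hW, hμ⟩ := exists_isAdmissibleWeight hε' hq hq0 hq' hs₀
  exact ⟨_, hs₀, hW.exists_solution (fun s hs => hμ s (hsub' hs)) hε hε'.le
    (fun x hx => (hq x (hsub' hx)).continuousAt.continuousWithinAt) (fun s hs => hq0 s (hsub' hs))
    (fun t ht => hsmall t (hsub ht)) hqa hq_lim⟩

theorem exists_solution_of_contDiffOn {a b ε ε' : ℝ} {q : ℝ → ℝ} (hab : a < b) (hε : |ε| ≤ 1)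
    (hε' : |ε'| = 1) (hq : ContDiffOn ℝ 1 q (Ico a b)) (hqa : q a = 0)
    (hq0 : ∀ x ∈ Ioo a b, q x ≠ 0) (hq' : 0 ≤ ε' * derivWithin q (Ici a) a) :
    ∃ s₀ ∈ Ioo a b, ∃ w : ℝ → ℝ, ContinuousOn w (Ico a s₀) ∧ w a = 0 ∧
      ∀ s ∈ Ioo a s₀, HasDerivAt w ((ε' + ε * w s ^ 2) * (1 - w s * (1 / q s))) s := by
  have ha : a ∈ Ico a b := left_mem_Ico.2 hab
  have hnhds : 𝓝[>] a ≤ 𝓝[Ico a b] a := by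
    rw [← nhdsWithin_Ioo_eq_nhdsGT hab]; exact nhdsWithin_mono _ Ioo_subset_Ico_self
  have hq_lim : Tendsto q (𝓝[>] a) (𝓝 0) := hqa ▸ (hq.continuousOn a ha).tendsto.mono_left hnhds
  have hD : Tendsto (deriv q) (𝓝[>] a) (𝓝 (derivWithin q (Ici a) a)) := by
    rw [derivWithin_of_mem_nhdsWithin (Ico_mem_nhdsGE hab) (uniqueDiffWithinAt_Ici a)
      (hq.differentiableOn one_ne_zero a ha)]
    refine (((hq.continuousOn_derivWithin (uniqueDiffOn_Ico a b) le_rfl) a ha).tendsto.mono_left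
      hnhds).congr' ?_
    filter_upwards [Ioo_mem_nhdsGT hab] with x hx
    exact derivWithin_of_mem_nhds (Ico_mem_nhds hx.1 hx.2)
  have hsmall : ∀ᶠ x in 𝓝[>] a, |q x| ≤ 1 / 12 := hq_lim.abs.eventually_le_const (by norm_num)
  have hder : ∀ᶠ x in 𝓝[>] a, -(1 / 2) ≤ ε' * deriv q x :=
    (hD.const_mul ε').eventually_const_le (by linarith)
  obtain ⟨b₁, hab₁, hsub⟩ := mem_nhdsGT_iff_exists_Ioo_subset.1
    (Filter.Eventually.and (Ioo_mem_nhdsGT hab) (hsmall.and hder))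
  have hqd (x : ℝ) (hx : x ∈ Ioo a b₁) : HasDerivAt q (deriv q x) x :=
    ((hq.differentiableOn one_ne_zero x (Ioo_subset_Ico_self (hsub hx).1)).differentiableAt
      (Ico_mem_nhds (hsub hx).1.1 (hsub hx).1.2)).hasDerivAt
  obtain ⟨s₀, hs₀, hw⟩ := exists_solution_of_Ioo hab₁ hε hε' hqa hq_lim hqd
    (fun x hx => hq0 x (hsub hx).1) (fun x hx => (hsub hx).2.1) (fun x hx => (hsub hx).2.2)
  exact ⟨s₀, (hsub hs₀).1, hw⟩

end SingularODE

/-- Solution to the boundary problem with singularity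
`w' = (ε̃ + ε w²)(1 − w h)`, `w(a) = 0`, where `h = 1/q` and `q(a) = 0`. -/
theorem boundary_problem_singularity_existence
    (a : ℝ) (b : EReal) (hab : (a : EReal) < b)
    (ε ε' : ℝ) (hε : ε = 1 ∨ ε = -1) (hε' : ε' = 1 ∨ ε' = -1)
    (q : ℝ → ℝ)
    (hq : ContDiffOn ℝ 1 q {s : ℝ | a ≤ s ∧ (s : EReal) < b})
    (hqa : q a = 0)
    (hqne : ∀ s : ℝ, a < s → (s : EReal) < b → q s ≠ 0)
    (hq' : 0 ≤ ε' * derivWithin q (Set.Ici a) a) :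
    ∃ δ : ℝ, 0 < δ ∧ ((a + δ : ℝ) : EReal) ≤ b ∧
      ∃ w : ℝ → ℝ,
        ContinuousOn w (Set.Ico a (a + δ)) ∧
        w a = 0 ∧
        ∀ s ∈ Set.Ioo a (a + δ),
          HasDerivAt w ((ε' + ε * w s ^ 2) * (1 - w s * (1 / q s))) s := by
  obtain ⟨b₁, hab₁, hb₁⟩ := EReal.lt_iff_exists_real_btwn.1 hab
  have hsub : Ico a b₁ ⊆ {s : ℝ | a ≤ s ∧ (s : EReal) < b} :=
    fun s hs => ⟨hs.1, (EReal.coe_lt_coe_iff.2 hs.2).trans hb₁⟩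
  obtain ⟨s₀, hs₀, w, hw⟩ := SingularODE.exists_solution_of_contDiffOn (ε := ε)
    (EReal.coe_lt_coe_iff.1 hab₁) (by rcases hε with rfl | rfl <;> norm_num)
    (by rcases hε' with rfl | rfl <;> norm_num) (hq.mono hsub) hqa
    (fun x hx => hqne x hx.1 (hsub (Ioo_subset_Ico_self hx)).2) hq'
  refine ⟨s₀ - a, sub_pos.2 hs₀.1, ?_, w, ?_⟩
  · rw [add_sub_cancel]
    exact (EReal.coe_lt_coe_iff.2 hs₀.2).le.trans hb₁.le
  · rwa [add_sub_cancel]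
end

section
/- Let a < b ≤ +∞, let s₀ ∈ (a, b), and let h : (a, b) → ℝ be continuously differentiable with h(s) > 0 for all s ∈ (a, b). Then for each w₀ ∈ ℝ there exist ρ > 0 and a twice continuously differentiable function w : (s₀ − ρ, b) → ℝ satisfying w'(s) = (1 + w(s)²)·(1 − h(s)·w(s)) for all s ∈ (s₀ − ρ, b) and w(s₀) = w₀; moreover any two such solutions agree on the intersection of their domains. In particular the forward solution extends to the whole interval [s₀, b). -/
/-!
Truncating the field outside `[-M, M]` gives, by Picard–Lindelöf, a solution on every compact
time interval. Since `h > 0`, the interval `[-M, M]` with `M > max |w₀| (1 / min h)` is forward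
invariant (`w' < 0` at `w = M` and `w' > 0` at `w = -M`), so forward solutions never blow up and
glue to a solution up to `b`. Uniqueness is Lipschitz uniqueness, propagated along the interval;
it needs `h` to be locally bounded, which left of `a` follows from `w ∈ C²`: there
`h w = 1 - w' / (1 + w²)` is `C¹`, and `w' = 1` at the zeros of `w`.
-/

open Set Filter

/-- A solution of `w' = (1 + w²)(1 − h w)` with `w(s₀) = w₀` on the interval
`(s₀ − ρ, b)` (with `b` possibly `+∞`). -/
def IsSolOnLeftNbhd (b : EReal) (h : ℝ → ℝ) (s₀ ρ w₀ : ℝ) (w : ℝ → ℝ) : Prop :=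
  ContDiffOn ℝ 2 w {s : ℝ | s₀ - ρ < s ∧ (s : EReal) < b} ∧
  w s₀ = w₀ ∧
  ∀ s : ℝ, s₀ - ρ < s → (s : EReal) < b →
    HasDerivAt w ((1 + w s ^ 2) * (1 - h s * w s)) s

open Topology

noncomputable def riccati (h : ℝ → ℝ) (t x : ℝ) : ℝ := (1 + x ^ 2) * (1 - h t * x)

section

variable {h : ℝ → ℝ} {t x C M : ℝ}

lemma mapsTo_Icc_of_hasDerivWithinAt {f f' : ℝ → ℝ} {a b m M : ℝ} (hf : ContinuousOn f (Icc a b))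
    (hf' : ∀ t ∈ Ico a b, HasDerivWithinAt f (f' t) (Ici t) t) (ha : f a ∈ Icc m M)
    (hM : ∀ t ∈ Ico a b, f t = M → f' t < 0) (hm : ∀ t ∈ Ico a b, f t = m → 0 < f' t) :
    MapsTo f (Icc a b) (Icc m M) := by
  intro t ht
  refine ⟨?_, image_le_of_deriv_right_lt_deriv_boundary' hf hf' ha.2 continuousOn_const
    (fun _ _ => hasDerivWithinAt_const _ _ _) hM ht⟩
  have := image_le_of_deriv_right_lt_deriv_boundary' (f := fun t => -f t) hf.neg
    (fun t ht => (hf' t ht).neg) (neg_le_neg ha.1) (B := fun _ => -m) continuousOn_const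
    (fun _ _ => hasDerivWithinAt_const _ _ _)
    (fun t ht hft => neg_lt_zero.2 (hm t ht (neg_inj.1 hft))) ht
  exact neg_le_neg_iff.1 this

lemma exists_forall_mem_Icc_hasDerivWithinAt_of_lipschitzWith {E : Type*}
    [NormedAddCommGroup E] [NormedSpace ℝ E] [CompleteSpace E] {v : ℝ → E → E}
    {tmin tmax t₀ : ℝ} {K L : NNReal} (x₀ : E) (ht₀ : t₀ ∈ Icc tmin tmax)
    (hlip : ∀ t ∈ Icc tmin tmax, LipschitzWith K (v t))
    (hcont : ∀ x, ContinuousOn (v · x) (Icc tmin tmax))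
    (hbdd : ∀ t ∈ Icc tmin tmax, ∀ x, ‖v t x‖ ≤ L) :
    ∃ α : ℝ → E, α t₀ = x₀ ∧
      ∀ t ∈ Icc tmin tmax, HasDerivWithinAt α (v t (α t)) (Icc tmin tmax) t := by
  have hpl : IsPicardLindelof v ⟨t₀, ht₀⟩ x₀ (L * (tmax - tmin).toNNReal) 0 L K :=
    { lipschitzOnWith := fun t ht => (hlip t ht).lipschitzOnWith
      continuousOn := fun x _ => hcont x
      norm_le := fun t ht x _ => hbdd t ht x
      mul_max_le := by
        rw [NNReal.coe_mul, Real.coe_toNNReal _ (by linarith [ht₀.1, ht₀.2]), NNReal.coe_zero,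
          sub_zero]
        exact mul_le_mul_of_nonneg_left (max_le (by linarith [ht₀.1]) (by linarith [ht₀.2]))
          L.coe_nonneg }
  exact hpl.exists_eq_forall_mem_Icc_hasDerivWithinAt₀

lemma isBoundedUnder_abs_of_mul_eq {u w P : ℝ → ℝ} {c : ℝ} (hw : DifferentiableAt ℝ w c)
    (hP : DifferentiableAt ℝ P c) (huwP : ∀ᶠ t in 𝓝 c, u t * w t = P t)
    (hc : w c = 0 → deriv w c ≠ 0) : (𝓝 c).IsBoundedUnder (· ≤ ·) fun t => |u t| := by
  obtain ⟨L, hL, hw0⟩ : ∃ L, Tendsto (fun t => P t / w t) (𝓝[≠] c) (𝓝 L) ∧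
      ∀ᶠ t in 𝓝[≠] c, w t ≠ 0 := by
    by_cases hwc : w c = 0
    · have hPc : P c = 0 := by rw [← huwP.self_of_nhds, hwc, mul_zero]
      have hslope := hw.hasDerivAt.tendsto_slope
      refine ⟨deriv P c / deriv w c,
        (hP.hasDerivAt.tendsto_slope.div hslope (hc hwc)).congr' ?_, ?_⟩
      · filter_upwards [self_mem_nhdsWithin] with t (ht : t ≠ c)
        simp only [Pi.div_apply, slope_def_field, hPc, hwc, sub_zero]
        exact div_div_div_cancel_right₀ (sub_ne_zero.2 ht) _ _
      · filter_upwards [hslope.eventually_ne (hc hwc)] with t ht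
        rw [slope_def_field, hwc, sub_zero] at ht
        exact (div_ne_zero_iff.1 ht).1
    · exact ⟨_, (hP.continuousAt.div hw.continuousAt hwc).tendsto.mono_left nhdsWithin_le_nhds,
        (hw.continuousAt.eventually_ne hwc).filter_mono nhdsWithin_le_nhds⟩
  have hu : ∀ᶠ t in 𝓝[≠] c, |u t| < |L| + 1 := by
    filter_upwards [hL.abs.eventually (gt_mem_nhds (lt_add_one |L|)), hw0,
      huwP.filter_mono nhdsWithin_le_nhds] with t ht hwt hut
    rwa [← hut, mul_div_cancel_right₀ _ hwt] at ht
  refine isBoundedUnder_of_eventually_le (a := max (|L| + 1) |u c|) ?_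
  filter_upwards [eventually_nhdsWithin_iff.1 hu] with t ht
  rcases eq_or_ne t c with rfl | htc
  · exact le_max_right _ _
  · exact (ht htc).le.trans (le_max_left _ _)

lemma isOpen_setOf_lt_and_coe_lt (c : ℝ) (b : EReal) :
    IsOpen {s : ℝ | c < s ∧ (s : EReal) < b} :=
  isOpen_Ioi.inter (isOpen_Iio.preimage continuous_coe_real_ereal)

lemma ordConnected_setOf_lt_and_coe_lt (c : ℝ) (b : EReal) :
    OrdConnected {s : ℝ | c < s ∧ (s : EReal) < b} :=
  ⟨fun _ hx _ hy _ hz => ⟨hx.1.trans_le hz.1, (EReal.coe_le_coe_iff.2 hz.2).trans_lt hy.2⟩⟩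

lemma hasDerivAt_riccati (h : ℝ → ℝ) (t x : ℝ) :
    HasDerivAt (riccati h t) (2 * x - h t * (1 + 3 * x ^ 2)) x := by
  have h1 : HasDerivAt (fun x => 1 + x ^ 2) (2 * x) x := by
    simpa using (hasDerivAt_pow 2 x).const_add 1
  have h2 : HasDerivAt (fun x => 1 - h t * x) (-h t) x := by
    simpa using ((hasDerivAt_id x).const_mul (h t)).const_sub 1
  exact (h1.mul h2).congr_deriv (by ring)

lemma abs_riccati_le (ht : |h t| ≤ C) (hx : x ∈ Icc (-M) M) :
    |riccati h t x| ≤ (1 + M ^ 2) * (1 + C * M) := by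
  have hx' : |x| ≤ M := abs_le.2 hx
  have hsq : x ^ 2 ≤ M ^ 2 := sq_le_sq' hx.1 hx.2
  have hhx : |h t * x| ≤ C * M := by
    rw [abs_mul]; exact mul_le_mul ht hx' (abs_nonneg _) ((abs_nonneg _).trans ht)
  rw [riccati, abs_mul, abs_of_pos (by positivity : (0 : ℝ) < 1 + x ^ 2)]
  have : |1 - h t * x| ≤ 1 + C * M := (abs_sub _ _).trans (by rw [abs_one]; linarith)
  exact mul_le_mul (by linarith) this (abs_nonneg _) (by positivity)

lemma lipschitzOnWith_riccati (ht : |h t| ≤ C) :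
    LipschitzOnWith (2 * M + C * (1 + 3 * M ^ 2)).toNNReal (riccati h t) (Icc (-M) M) := by
  refine (convex_Icc _ _).lipschitzOnWith_of_nnnorm_hasDerivWithin_le
    (fun x _ => (hasDerivAt_riccati h t x).hasDerivWithinAt) fun x hx => ?_
  rw [← NNReal.coe_le_coe, coe_nnnorm, Real.norm_eq_abs]
  refine le_trans ?_ (Real.le_coe_toNNReal _)
  have hx' : |x| ≤ M := abs_le.2 hx
  have hsq : x ^ 2 ≤ M ^ 2 := sq_le_sq' hx.1 hx.2
  calc |2 * x - h t * (1 + 3 * x ^ 2)| ≤ |2 * x| + |h t * (1 + 3 * x ^ 2)| := abs_sub _ _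
    _ ≤ 2 * M + C * (1 + 3 * M ^ 2) := by
      rw [abs_mul, abs_mul, abs_two, abs_of_pos (by positivity : (0 : ℝ) < 1 + 3 * x ^ 2)]
      gcongr
      exact (abs_nonneg _).trans ht

lemma riccati_neg_of_one_lt_mul (hx : 1 < h t * x) : riccati h t x < 0 :=
  mul_neg_of_pos_of_neg (by positivity) (by linarith)

lemma riccati_pos_of_nonpos (ht : 0 ≤ h t) (hx : x ≤ 0) : 0 < riccati h t x :=
  mul_pos (by positivity) (by nlinarith)

lemma eventuallyEq_of_hasDerivAt_riccati {f g : ℝ → ℝ} {c : ℝ}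
    (hh : (𝓝 c).IsBoundedUnder (· ≤ ·) fun t => |h t|)
    (hf : ∀ᶠ t in 𝓝 c, HasDerivAt f (riccati h t (f t)) t)
    (hg : ∀ᶠ t in 𝓝 c, HasDerivAt g (riccati h t (g t)) t) (heq : f c = g c) :
    f =ᶠ[𝓝 c] g := by
  obtain ⟨C, hC⟩ := hh
  set M := |f c| + 1
  have hIcc : Icc (-M) M ∈ 𝓝 (f c) :=
    Icc_mem_nhds (by linarith [neg_abs_le (f c)]) (by linarith [le_abs_self (f c)])
  have hfM : ∀ᶠ t in 𝓝 c, f t ∈ Icc (-M) M := hf.self_of_nhds.continuousAt.eventually_mem hIcc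
  have hgM : ∀ᶠ t in 𝓝 c, g t ∈ Icc (-M) M :=
    hg.self_of_nhds.continuousAt.eventually_mem (heq ▸ hIcc)
  exact ODE_solution_unique_of_eventually
    ((eventually_map.1 hC).mono fun t ht => lipschitzOnWith_riccati ht)
    (hf.and hfM) (hg.and hgM) heq

lemma eqOn_of_hasDerivAt_riccati {f g : ℝ → ℝ} {I : Set ℝ} (hI : IsPreconnected I)
    (hIo : IsOpen I) (hh : ∀ c ∈ I, (𝓝 c).IsBoundedUnder (· ≤ ·) fun t => |h t|)
    (hf : ∀ t ∈ I, HasDerivAt f (riccati h t (f t)) t)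
    (hg : ∀ t ∈ I, HasDerivAt g (riccati h t (g t)) t) {c₀ : ℝ} (hc₀ : c₀ ∈ I)
    (heq : f c₀ = g c₀) : EqOn f g I := by
  intro t ht
  -- the set where `f = g` is open (local uniqueness) and closed (continuity)
  refine hI.induction₂' (fun x y => f x = g x → f y = g y) (fun x hx => ?_)
    (fun _ _ _ _ _ _ hxy hyz hx => hyz (hxy hx)) hc₀ ht heq
  have hI : ∀ᶠ y in 𝓝 x, y ∈ I := hIo.mem_nhds hx
  refine nhdsWithin_le_nhds ?_
  by_cases hfgx : f x = g x
  · filter_upwards [eventuallyEq_of_hasDerivAt_riccati (hh x hx) (hI.mono hf) (hI.mono hg) hfgx]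
      with y hy using ⟨fun _ => hy, fun _ => hfgx⟩
  · filter_upwards [((hf x hx).continuousAt.ne_iff_eventually_ne (hg x hx).continuousAt).1 hfgx]
      with y hy using ⟨fun hx => absurd hx hfgx, fun hy' => absurd hy' hy⟩

lemma isBoundedUnder_abs_of_contDiffOn_riccati {w : ℝ → ℝ} {D : Set ℝ} (hD : IsOpen D)
    (hw2 : ContDiffOn ℝ 2 w D) (hw : ∀ t ∈ D, HasDerivAt w (riccati h t (w t)) t) {c : ℝ}
    (hc : c ∈ D) : (𝓝 c).IsBoundedUnder (· ≤ ·) fun t => |h t| := by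
  have hw' : ContDiffOn ℝ 1 (deriv w) D :=
    ((contDiffOn_succ_iff_deriv_of_isOpen (n := 1) hD).1 hw2).2.2
  -- `h w = 1 - w' / (1 + w²)` is differentiable, and `w' = 1` wherever `w = 0`
  refine isBoundedUnder_abs_of_mul_eq (P := fun t => 1 - deriv w t / (1 + w t ^ 2))
    (hw c hc).differentiableAt ?_ ?_ ?_
  · exact (differentiableAt_const _).sub <|
      ((hw'.differentiableOn one_ne_zero c hc).differentiableAt (hD.mem_nhds hc)).div
        ((differentiableAt_const _).add ((hw c hc).differentiableAt.pow 2)) (by positivity)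
  · filter_upwards [hD.mem_nhds hc] with t ht
    rw [(hw t ht).deriv, riccati]
    field_simp
    ring
  · intro hwc
    rw [(hw c hc).deriv, riccati, hwc]
    norm_num

noncomputable def truncatedRiccati (h : ℝ → ℝ) (M t x : ℝ) : ℝ :=
  riccati h t (max (-M) (min M x))

lemma truncatedRiccati_of_mem (hx : x ∈ Icc (-M) M) : truncatedRiccati h M t x = riccati h t x := by
  rw [truncatedRiccati, min_eq_right hx.2, max_eq_right hx.1]

lemma max_neg_min_mem_Icc (hM : 0 ≤ M) (x : ℝ) : max (-M) (min M x) ∈ Icc (-M) M :=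
  ⟨le_max_left _ _, max_le (by linarith) (min_le_left _ _)⟩

lemma abs_truncatedRiccati_le (ht : |h t| ≤ C) (hM : 0 ≤ M) :
    |truncatedRiccati h M t x| ≤ (1 + M ^ 2) * (1 + C * M) :=
  abs_riccati_le ht (max_neg_min_mem_Icc hM x)

lemma lipschitzWith_truncatedRiccati (ht : |h t| ≤ C) (hM : 0 ≤ M) :
    LipschitzWith (2 * M + C * (1 + 3 * M ^ 2)).toNNReal (truncatedRiccati h M t) := by
  have := (lipschitzOnWith_riccati ht).comp
    ((LipschitzWith.id.const_min M).const_max (-M)).lipschitzOnWith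
    (fun x (_ : x ∈ univ) => max_neg_min_mem_Icc hM x)
  rw [mul_one, lipschitzOnWith_univ] at this
  exact this

lemma exists_hasDerivWithinAt_truncatedRiccati {t₁ t₀ T w₀ : ℝ} (ht₀ : t₀ ∈ Icc t₁ T)
    (hcont : ContinuousOn h (Icc t₁ T)) (hC : ∀ t ∈ Icc t₁ T, |h t| ≤ C) (hM : 0 ≤ M) :
    ∃ α : ℝ → ℝ, α t₀ = w₀ ∧ ∀ t ∈ Icc t₁ T,
      HasDerivWithinAt α (truncatedRiccati h M t (α t)) (Icc t₁ T) t :=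
  exists_forall_mem_Icc_hasDerivWithinAt_of_lipschitzWith
    (L := ((1 + M ^ 2) * (1 + C * M)).toNNReal) w₀ ht₀
    (fun t ht => lipschitzWith_truncatedRiccati (hC t ht) hM)
    (fun _ => continuousOn_const.mul (continuousOn_const.sub (hcont.mul continuousOn_const)))
    (fun t ht _ => (abs_truncatedRiccati_le (hC t ht) hM).trans (Real.le_coe_toNNReal _))

lemma mapsTo_Icc_of_hasDerivWithinAt_truncatedRiccati {α : ℝ → ℝ} {s₀ T δ : ℝ} (hδ : 0 < δ)
    (hδh : ∀ t ∈ Icc s₀ T, δ ≤ h t) (hδM : δ⁻¹ < M) (hα₀ : α s₀ ∈ Icc (-M) M)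
    (hα : ∀ t ∈ Icc s₀ T, HasDerivWithinAt α (truncatedRiccati h M t (α t)) (Icc s₀ T) t) :
    MapsTo α (Icc s₀ T) (Icc (-M) M) := by
  have hM : 0 < M := (inv_pos.2 hδ).trans hδM
  refine mapsTo_Icc_of_hasDerivWithinAt (HasDerivWithinAt.continuousOn hα)
    (fun t ht => (hα t (Ico_subset_Icc_self ht)).mono_of_mem_nhdsWithin
      (Icc_mem_nhdsGE_of_mem ht)) hα₀ (fun t ht hαt => ?_) (fun t ht hαt => ?_)
  · have h1 : 1 < δ * M :=
      calc 1 = δ * δ⁻¹ := (mul_inv_cancel₀ hδ.ne').symm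
        _ < δ * M := mul_lt_mul_of_pos_left hδM hδ
    rw [hαt, truncatedRiccati_of_mem ⟨by linarith, le_rfl⟩]
    exact riccati_neg_of_one_lt_mul
      (h1.trans_le (mul_le_mul_of_nonneg_right (hδh t (Ico_subset_Icc_self ht)) hM.le))
  · rw [hαt, truncatedRiccati_of_mem ⟨le_rfl, by linarith⟩]
    exact riccati_pos_of_nonpos (hδ.le.trans (hδh t (Ico_subset_Icc_self ht))) (by linarith)

lemma exists_hasDerivAt_riccati_Ioo_of_bounds {t₁ s₀ T w₀ δ : ℝ} (h₁ : t₁ < s₀) (hT : s₀ ≤ T)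
    (hcont : ContinuousOn h (Icc t₁ T)) (hδ : 0 < δ) (hδh : ∀ t ∈ Icc s₀ T, δ ≤ h t)
    (hC : ∀ t ∈ Icc t₁ T, |h t| ≤ C) :
    ∃ t₂ ∈ Ico t₁ s₀, ∃ w : ℝ → ℝ, w s₀ = w₀ ∧
      ∀ t ∈ Ioo t₂ T, HasDerivAt w (riccati h t (w t)) t := by
  -- Truncating at `M` does not change the solution: forward it stays in `[-M, M]` since
  -- `M > 1/δ`, backward it moves by at most `L (s₀ - t) ≤ 1`.
  set M := max |w₀| δ⁻¹ + 1
  have hM : 0 ≤ M := by positivity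
  have hC0 : 0 ≤ C := (abs_nonneg _).trans (hC t₁ ⟨le_rfl, h₁.le.trans hT⟩)
  set L := (1 + M ^ 2) * (1 + C * M)
  have hL : 0 ≤ L := by positivity
  set t₂ := max t₁ (s₀ - (L + 1)⁻¹)
  have ht₂ : t₂ < s₀ := max_lt h₁ (by linarith [inv_pos.2 (by linarith : 0 < L + 1)])
  have hsub : Icc t₂ T ⊆ Icc t₁ T := Icc_subset_Icc_left (le_max_left _ _)
  obtain ⟨α, hα₀, hα⟩ := exists_hasDerivWithinAt_truncatedRiccati (w₀ := w₀) ⟨ht₂.le, hT⟩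
    (hcont.mono hsub) (fun t ht => hC t (hsub ht)) hM
  have hback : ∀ t ∈ Icc t₂ s₀, α t ∈ Icc (-M) M := by
    intro t ht
    have hdist := (convex_Icc t₂ T).norm_image_sub_le_of_norm_hasDerivWithin_le hα
      (fun t ht => abs_truncatedRiccati_le (hC t (hsub ht)) hM) ⟨ht₂.le, hT⟩ ⟨ht.1, ht.2.trans hT⟩
    rw [Real.norm_eq_abs, Real.norm_eq_abs, hα₀] at hdist
    have hts : |t - s₀| ≤ (L + 1)⁻¹ := by
      rw [abs_sub_comm, abs_of_nonneg (by linarith [ht.2])]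
      linarith [ht.1, le_max_right t₁ (s₀ - (L + 1)⁻¹)]
    have : L * |t - s₀| ≤ 1 :=
      calc L * |t - s₀| ≤ (L + 1) * (L + 1)⁻¹ :=
            mul_le_mul (by linarith) hts (abs_nonneg _) (by linarith)
        _ = 1 := mul_inv_cancel₀ (by linarith)
    have := abs_le.1 (hdist.trans this)
    constructor <;> linarith [le_max_left |w₀| δ⁻¹, neg_abs_le w₀, le_abs_self w₀]
  have hfwd : MapsTo α (Icc s₀ T) (Icc (-M) M) :=
    mapsTo_Icc_of_hasDerivWithinAt_truncatedRiccati hδ hδh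
      (by linarith [le_max_right |w₀| δ⁻¹]) (hback s₀ ⟨ht₂.le, le_rfl⟩)
      fun t ht => (hα t ⟨ht₂.le.trans ht.1, ht.2⟩).mono (Icc_subset_Icc_left ht₂.le)
  refine ⟨t₂, ⟨le_max_left _ _, ht₂⟩, α, hα₀, fun t ht => ?_⟩
  have hαt : α t ∈ Icc (-M) M :=
    (le_total t s₀).elim (fun hts => hback t ⟨ht.1.le, hts⟩) (fun hts => hfwd ⟨hts, ht.2.le⟩)
  have := (hα t (Ioo_subset_Icc_self ht)).hasDerivAt (Icc_mem_nhds ht.1 ht.2)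
  rwa [truncatedRiccati_of_mem hαt] at this

lemma exists_hasDerivAt_riccati_Ioo {t₁ s₀ T w₀ : ℝ} (h₁ : t₁ < s₀) (hT : s₀ ≤ T)
    (hcont : ContinuousOn h (Icc t₁ T)) (hpos : ∀ t ∈ Icc s₀ T, 0 < h t) :
    ∃ t₂ ∈ Ico t₁ s₀, ∃ w : ℝ → ℝ, w s₀ = w₀ ∧
      ∀ t ∈ Ioo t₂ T, HasDerivAt w (riccati h t (w t)) t := by
  obtain ⟨τ, hτ, hτmin⟩ := isCompact_Icc.exists_isMinOn (nonempty_Icc.2 hT)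
    (hcont.mono (Icc_subset_Icc_left h₁.le))
  obtain ⟨C, hC⟩ := isCompact_Icc.exists_bound_of_continuousOn hcont
  exact exists_hasDerivAt_riccati_Ioo_of_bounds h₁ hT hcont (hpos τ hτ) (fun t ht => hτmin ht) hC

lemma exists_hasDerivAt_riccati_Ioo_of_continuousOn {a s₀ T w₀ : ℝ} {b : EReal} (ha : a < s₀)
    (hT : s₀ ≤ T) (hTb : (T : EReal) < b) (hcont : ContinuousOn h {s | a < s ∧ (s : EReal) < b})
    (hpos : ∀ s, a < s → (s : EReal) < b → 0 < h s) :
    ∃ p ∈ Ioo a s₀, ∃ f : ℝ → ℝ, f s₀ = w₀ ∧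
      ∀ t ∈ Ioo p T, HasDerivAt f (riccati h t (f t)) t := by
  have hsub : Icc ((a + s₀) / 2) T ⊆ {s | a < s ∧ (s : EReal) < b} := fun t ht =>
    ⟨by linarith [ht.1], (EReal.coe_le_coe_iff.2 ht.2).trans_lt hTb⟩
  obtain ⟨p, hp, f, hf₀, hf⟩ := exists_hasDerivAt_riccati_Ioo (w₀ := w₀)
    (by linarith : (a + s₀) / 2 < s₀) hT (hcont.mono hsub)
    fun t ht => (hsub ⟨by linarith [ht.1], ht.2⟩).elim (hpos t)
  exact ⟨p, ⟨by linarith [hp.1], hp.2⟩, f, hf₀, hf⟩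

lemma exists_hasDerivAt_riccati {a s₀ w₀ : ℝ} {b : EReal} (hs₀ : a < s₀ ∧ (s₀ : EReal) < b)
    (hcont : ContinuousOn h {s | a < s ∧ (s : EReal) < b})
    (hpos : ∀ s, a < s → (s : EReal) < b → 0 < h s) :
    ∃ ρ > 0, a < s₀ - ρ ∧ ∃ w : ℝ → ℝ, w s₀ = w₀ ∧
      ∀ s, s₀ - ρ < s → (s : EReal) < b → HasDerivAt w (riccati h s (w s)) s := by
  obtain ⟨T₀, hs₀T₀, hT₀b⟩ := EReal.exists_between_coe_real hs₀.2
  rw [EReal.coe_lt_coe_iff] at hs₀T₀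
  obtain ⟨p₀, hp₀, f₀, hf₀⟩ :=
    exists_hasDerivAt_riccati_Ioo_of_continuousOn (w₀ := w₀) hs₀.1 hs₀T₀.le hT₀b hcont hpos
  have cover (t : ℝ) (ht : p₀ < t) (htb : (t : EReal) < b) : ∃ p q : ℝ, ∃ f : ℝ → ℝ,
      a < p ∧ (q : EReal) < b ∧ s₀ ∈ Ioo p q ∧ t ∈ Ioo p q ∧ f s₀ = w₀ ∧
      ∀ u ∈ Ioo p q, HasDerivAt f (riccati h u (f u)) u := by
    by_cases htT₀ : t < T₀
    · exact ⟨p₀, T₀, f₀, hp₀.1, hT₀b, ⟨hp₀.2, hs₀T₀⟩, ⟨ht, htT₀⟩, hf₀⟩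
    · obtain ⟨T, htT, hTb⟩ := EReal.exists_between_coe_real htb
      rw [EReal.coe_lt_coe_iff] at htT
      obtain ⟨p, hp, f, hf⟩ :=
        exists_hasDerivAt_riccati_Ioo_of_continuousOn hs₀.1 (by linarith) hTb hcont hpos
      exact ⟨p, T, f, hp.1, hTb, ⟨hp.2, by linarith⟩, ⟨by linarith [hp.2], htT⟩, hf⟩
  choose! p q f hpa hqb hs₀pq htpq hfs₀ hf using cover
  refine ⟨s₀ - p₀, by linarith [hp₀.2], by linarith [hp₀.1], fun t => f t t,
    hfs₀ s₀ hp₀.2 hs₀.2, fun t ht htb => ?_⟩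
  rw [sub_sub_cancel] at ht
  have hagree (u : ℝ) (hu : p₀ < u) (hub : (u : EReal) < b) (hut : u ∈ Ioo (p t) (q t)) :
      f u u = f t u := by
    refine eqOn_of_hasDerivAt_riccati (ordConnected_Ioo.inter ordConnected_Ioo).isPreconnected
      (isOpen_Ioo.inter isOpen_Ioo) (fun c hc => ?_) (fun x hx => hf u hu hub x hx.1)
      (fun x hx => hf t ht htb x hx.2) ⟨hs₀pq u hu hub, hs₀pq t ht htb⟩
      ((hfs₀ u hu hub).trans (hfs₀ t ht htb).symm) ⟨htpq u hu hub, hut⟩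
    have hcU : c ∈ {s | a < s ∧ (s : EReal) < b} :=
      ⟨(hpa u hu hub).trans hc.1.1, (EReal.coe_lt_coe_iff.2 hc.1.2).trans (hqb u hu hub)⟩
    exact (hcont.continuousAt ((isOpen_setOf_lt_and_coe_lt a b).mem_nhds hcU)).abs.tendsto
      |>.isBoundedUnder_le
  refine (hf t ht htb t (htpq t ht htb)).congr_of_eventuallyEq ?_
  filter_upwards [Ioi_mem_nhds ht, (isOpen_Iio.preimage continuous_coe_real_ereal).mem_nhds htb,
    isOpen_Ioo.mem_nhds (htpq t ht htb)] with u hu hub hut using hagree u hu hub hut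

lemma contDiffOn_two_of_hasDerivAt_riccati {w : ℝ → ℝ} {D : Set ℝ} (hD : IsOpen D)
    (hh : ContDiffOn ℝ 1 h D) (hw : ∀ t ∈ D, HasDerivAt w (riccati h t (w t)) t) :
    ContDiffOn ℝ 2 w D := by
  have hderiv : EqOn (deriv w) (fun t => riccati h t (w t)) D := fun t ht => (hw t ht).deriv
  have hdiff : DifferentiableOn ℝ w D :=
    fun t ht => (hw t ht).differentiableAt.differentiableWithinAt
  have step (n : ℕ) (hn : n ≤ 1) (hwn : ContDiffOn ℝ n w D) : ContDiffOn ℝ (n + 1) w D := by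
    rw [contDiffOn_succ_iff_deriv_of_isOpen hD]
    refine ⟨hdiff, by simp, ContDiffOn.congr ?_ hderiv⟩
    exact (contDiffOn_const.add (hwn.pow 2)).mul
      (contDiffOn_const.sub ((hh.of_le (by exact_mod_cast hn)).mul hwn))
  exact step 1 le_rfl (step 0 zero_le_one (contDiffOn_zero.2 hdiff.continuousOn))

end

theorem extension_of_solutions_positive_h_general
    (a : ℝ) (b : EReal)
    (s₀ : ℝ) (hs₀ : a < s₀ ∧ (s₀ : EReal) < b)
    (h : ℝ → ℝ)
    (hC1 : ContDiffOn ℝ 1 h {s : ℝ | a < s ∧ (s : EReal) < b})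
    (hpos : ∀ s : ℝ, a < s → (s : EReal) < b → 0 < h s) :
    ∀ w₀ : ℝ,
      (∃ ρ : ℝ, 0 < ρ ∧ a < s₀ - ρ ∧
        ∃ w : ℝ → ℝ, IsSolOnLeftNbhd b h s₀ ρ w₀ w) ∧
      (∀ ρ₁ ρ₂ : ℝ, 0 < ρ₁ → 0 < ρ₂ → ∀ w₁ w₂ : ℝ → ℝ,
        IsSolOnLeftNbhd b h s₀ ρ₁ w₀ w₁ → IsSolOnLeftNbhd b h s₀ ρ₂ w₀ w₂ →
        ∀ s : ℝ, s₀ - ρ₁ < s → s₀ - ρ₂ < s → (s : EReal) < b → w₁ s = w₂ s) := by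
  intro w₀
  refine ⟨?_, ?_⟩
  · obtain ⟨ρ, hρ, haρ, w, hw₀, hw⟩ :=
      exists_hasDerivAt_riccati (w₀ := w₀) hs₀ hC1.continuousOn hpos
    refine ⟨ρ, hρ, haρ, w, ?_, hw₀, hw⟩
    exact contDiffOn_two_of_hasDerivAt_riccati (isOpen_setOf_lt_and_coe_lt _ b)
      (hC1.mono fun s hs => ⟨haρ.trans hs.1, hs.2⟩) fun s hs => hw s hs.1 hs.2
  · rintro ρ₁ ρ₂ hρ₁ hρ₂ w₁ w₂ ⟨hw₁C2, hw₁s₀, hw₁⟩ ⟨-, hw₂s₀, hw₂⟩ s hs₁ hs₂ hsb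
    set c := max (s₀ - ρ₁) (s₀ - ρ₂)
    refine eqOn_of_hasDerivAt_riccati (ordConnected_setOf_lt_and_coe_lt c b).isPreconnected
      (isOpen_setOf_lt_and_coe_lt c b) (fun t ht => ?_)
      (fun t ht => hw₁ t ((le_max_left _ _).trans_lt ht.1) ht.2)
      (fun t ht => hw₂ t ((le_max_right _ _).trans_lt ht.1) ht.2)
      (c₀ := s₀) ⟨max_lt (by linarith) (by linarith), hs₀.2⟩ (hw₁s₀.trans hw₂s₀.symm)
      ⟨max_lt hs₁ hs₂, hsb⟩
    exact isBoundedUnder_abs_of_contDiffOn_riccati (isOpen_setOf_lt_and_coe_lt _ b) hw₁C2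
      (fun t ht => hw₁ t ht.1 ht.2) ⟨(le_max_left _ _).trans_lt ht.1, ht.2⟩

/-- Under hypothesis (H) (`h ∈ C¹(a,b)`, `h > 0`), for each `w₀` the
initial value problem `w' = (1 + w²)(1 − h w)`, `w(s₀) = w₀` has a `C²` solution on
`(s₀ − ρ, b)` for some `ρ > 0`, and any two such solutions agree on the intersection
of their domains. -/
theorem extension_of_solutions_positive_h
    (a : ℝ) (b : EReal) (hab : (a : EReal) < b)
    (s₀ : ℝ) (hs₀ : a < s₀ ∧ (s₀ : EReal) < b)
    (h : ℝ → ℝ)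
    (hC1 : ContDiffOn ℝ 1 h {s : ℝ | a < s ∧ (s : EReal) < b})
    (hpos : ∀ s : ℝ, a < s → (s : EReal) < b → 0 < h s) :
    ∀ w₀ : ℝ,
      (∃ ρ : ℝ, 0 < ρ ∧ a < s₀ - ρ ∧
        ∃ w : ℝ → ℝ, IsSolOnLeftNbhd b h s₀ ρ w₀ w) ∧
      (∀ ρ₁ ρ₂ : ℝ, 0 < ρ₁ → 0 < ρ₂ → ∀ w₁ w₂ : ℝ → ℝ,
        IsSolOnLeftNbhd b h s₀ ρ₁ w₀ w₁ → IsSolOnLeftNbhd b h s₀ ρ₂ w₀ w₂ →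
        ∀ s : ℝ, s₀ - ρ₁ < s → s₀ - ρ₂ < s → (s : EReal) < b → w₁ s = w₂ s) :=
  extension_of_solutions_positive_h_general a b s₀ hs₀ h hC1 hpos
end

section
/- Let a < b < +∞, let s₀ ∈ (a, b), and let h : (a, b) → ℝ be continuously differentiable with h(s) > 0 for all s, satisfying lim_{s → b⁻} h(s) = +∞. Let w : [s₀, b) → ℝ be a continuously differentiable solution of w'(s) = (1 + w(s)²)·(1 − h(s)·w(s)). If there exist M > 0 and s₁ ∈ [s₀, b) such that w(s) ≥ M for every s ∈ [s₁, b), then there exists w₁ ≥ M with lim_{s → b⁻} w(s) = w₁, and lim_{s → b⁻} w'(s) = −∞. -/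
open Set Filter Topology

/-! Because `w ≥ M > 0` near `b` and `h → +∞`, the product `h w` tends to `+∞`, so the right-hand
side `(1 + w²)(1 − h w)` tends to `−∞` without any knowledge of the limit of `w`. In particular
`w` is eventually decreasing; being bounded below by `M`, it converges. -/

theorem Filter.Tendsto.atTop_mul_of_eventually_ge {α : Type*} {l : Filter α} {f g : α → ℝ}
    {c : ℝ} (hc : 0 < c) (hf : Tendsto f l atTop) (hg : ∀ᶠ x in l, c ≤ g x) :
    Tendsto (fun x => f x * g x) l atTop := by
  refine tendsto_atTop_mono' l ?_ (hf.atTop_mul_const hc)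
  filter_upwards [hf.eventually_ge_atTop 0, hg] with x hfx hgx
  exact mul_le_mul_of_nonneg_left hgx hfx

theorem tendsto_one_add_sq_mul_one_sub_atBot {α : Type*} {l : Filter α} {v g : α → ℝ}
    (hg : Tendsto g l atTop) : Tendsto (fun x => (1 + v x ^ 2) * (1 - g x)) l atBot := by
  have hlin : Tendsto (fun x => 1 - g x) l atBot := by
    simpa only [Function.comp_def, sub_eq_add_neg, add_comm] using
      tendsto_atBot_add_const_right l 1 (tendsto_neg_atTop_atBot.comp hg)
  refine tendsto_atBot_mono' l ?_ hlin
  filter_upwards [hg.eventually_ge_atTop 1] with x hgx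
  nlinarith [sq_nonneg (v x)]

theorem exists_tendsto_nhdsLT_of_hasDerivAt_nonpos {f f' : ℝ → ℝ} {b M : ℝ}
    (hf : ∀ᶠ x in 𝓝[<] b, HasDerivAt f (f' x) x) (hf' : ∀ᶠ x in 𝓝[<] b, f' x ≤ 0)
    (hM : ∀ᶠ x in 𝓝[<] b, M ≤ f x) : ∃ L, M ≤ L ∧ Tendsto f (𝓝[<] b) (𝓝 L) := by
  obtain ⟨c, hcb, hc⟩ := mem_nhdsLT_iff_exists_Ioo_subset.1 (hf.and (hf'.and hM))
  have hanti : AntitoneOn f (Ioo c b) := by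
    refine antitoneOn_of_hasDerivWithinAt_nonpos (f' := f') (convex_Ioo c b)
      (fun x hx => (hc hx).1.continuousAt.continuousWithinAt) (fun x hx => ?_) fun x hx => ?_
    all_goals rw [interior_Ioo] at hx
    exacts [(hc hx).1.hasDerivWithinAt, (hc hx).2.1]
  have hlim := hanti.tendsto_nhdsWithin_Ioo_left (nonempty_Ioo.2 hcb)
    ⟨M, forall_mem_image.2 fun x hx => (hc hx).2.2⟩
  exact ⟨_, ge_of_tendsto hlim hM, hlim⟩

theorem bounded_below_solution_limit_general
    (b s₀ : ℝ)
    (h : ℝ → ℝ)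
    (hblow : Filter.Tendsto h (nhdsWithin b (Set.Iio b)) Filter.atTop)
    (w : ℝ → ℝ)
    (hode : ∀ s ∈ Set.Ico s₀ b,
      HasDerivWithinAt w ((1 + w s ^ 2) * (1 - h s * w s)) (Set.Ico s₀ b) s)
    (M : ℝ) (hM : 0 < M) (s₁ : ℝ) (hs₁ : s₁ ∈ Set.Ico s₀ b)
    (hbound : ∀ s ∈ Set.Ico s₁ b, M ≤ w s) :
    (∃ w₁ : ℝ, M ≤ w₁ ∧ Filter.Tendsto w (nhdsWithin b (Set.Iio b)) (nhds w₁)) ∧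
    Filter.Tendsto (fun s => (1 + w s ^ 2) * (1 - h s * w s))
      (nhdsWithin b (Set.Iio b)) Filter.atBot := by
  have hwM : ∀ᶠ s in 𝓝[<] b, M ≤ w s := mem_of_superset (Ico_mem_nhdsLT hs₁.2) hbound
  have hrhs := tendsto_one_add_sq_mul_one_sub_atBot (v := w)
    (hblow.atTop_mul_of_eventually_ge hM hwM)
  have hderiv : ∀ᶠ s in 𝓝[<] b, HasDerivAt w ((1 + w s ^ 2) * (1 - h s * w s)) s := by
    filter_upwards [Ioo_mem_nhdsLT (hs₁.1.trans_lt hs₁.2)] with s hs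
    exact (hode s (Ioo_subset_Ico_self hs)).hasDerivAt (Ico_mem_nhds hs.1 hs.2)
  exact ⟨exists_tendsto_nhdsLT_of_hasDerivAt_nonpos hderiv (hrhs.eventually_le_atBot 0) hwM,
    hrhs⟩

/-- If `h ∈ C¹(a,b)` is positive, `b < +∞`, `h(s) → +∞` as `s → b⁻`,
and `w` solves `w' = (1 + w²)(1 − h w)` on `[s₀, b)` with `w ≥ M > 0` near `b`, then
`w` has a finite limit `w₁ ≥ M` at `b⁻` and `w' → −∞` at `b⁻`. -/
theorem bounded_below_solution_limit
    (a b s₀ : ℝ) (hab : a < b) (hs₀ : s₀ ∈ Set.Ioo a b)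
    (h : ℝ → ℝ)
    (hC1 : ContDiffOn ℝ 1 h (Set.Ioo a b))
    (hpos : ∀ s ∈ Set.Ioo a b, 0 < h s)
    (hblow : Filter.Tendsto h (nhdsWithin b (Set.Iio b)) Filter.atTop)
    (w : ℝ → ℝ)
    (hwC1 : ContDiffOn ℝ 1 w (Set.Ico s₀ b))
    (hode : ∀ s ∈ Set.Ico s₀ b,
      HasDerivWithinAt w ((1 + w s ^ 2) * (1 - h s * w s)) (Set.Ico s₀ b) s)
    (M : ℝ) (hM : 0 < M) (s₁ : ℝ) (hs₁ : s₁ ∈ Set.Ico s₀ b)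
    (hbound : ∀ s ∈ Set.Ico s₁ b, M ≤ w s) :
    (∃ w₁ : ℝ, M ≤ w₁ ∧ Filter.Tendsto w (nhdsWithin b (Set.Iio b)) (nhds w₁)) ∧
    Filter.Tendsto (fun s => (1 + w s ^ 2) * (1 - h s * w s))
      (nhdsWithin b (Set.Iio b)) Filter.atBot :=
  bounded_below_solution_limit_general b s₀ h hblow w hode M hM s₁ hs₁ hbound
end

section
/- Let a < b < +∞, let s₀ ∈ (a, b), and let h : (a, b) → ℝ be continuously differentiable with h(s) > 0 for all s, satisfying lim_{s → b⁻} h(s) = +∞. Let w : [s₀, b) → ℝ be a continuously differentiable solution of w'(s) = (1 + w(s)²)·(1 − h(s)·w(s)). If there exist M < 0 and s₁ ∈ [s₀, b) such that w(s) ≤ M for every s ∈ [s₁, b), then there exists w₁ ≤ M with lim_{s → b⁻} w(s) = w₁, and lim_{s → b⁻} w'(s) = +∞. -/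
open Set Filter

/-- If `h ∈ C¹(a,b)` is positive, `b < +∞`, `h(s) → +∞` as `s → b⁻`,
and `w` solves `w' = (1 + w²)(1 − h w)` on `[s₀, b)` with `w ≤ M < 0` near `b`, then
`w` has a finite limit `w₁ ≤ M` at `b⁻` and `w' → +∞` at `b⁻`. -/
theorem bounded_above_solution_limit
    (a b s₀ : ℝ) (hab : a < b) (hs₀ : s₀ ∈ Set.Ioo a b)
    (h : ℝ → ℝ)
    (hC1 : ContDiffOn ℝ 1 h (Set.Ioo a b))
    (hpos : ∀ s ∈ Set.Ioo a b, 0 < h s)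
    (hblow : Filter.Tendsto h (nhdsWithin b (Set.Iio b)) Filter.atTop)
    (w : ℝ → ℝ)
    (hwC1 : ContDiffOn ℝ 1 w (Set.Ico s₀ b))
    (hode : ∀ s ∈ Set.Ico s₀ b,
      HasDerivWithinAt w ((1 + w s ^ 2) * (1 - h s * w s)) (Set.Ico s₀ b) s)
    (M : ℝ) (hM : M < 0) (s₁ : ℝ) (hs₁ : s₁ ∈ Set.Ico s₀ b)
    (hbound : ∀ s ∈ Set.Ico s₁ b, w s ≤ M) :
    (∃ w₁ : ℝ, w₁ ≤ M ∧ Filter.Tendsto w (nhdsWithin b (Set.Iio b)) (nhds w₁)) ∧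
    Filter.Tendsto (fun s => (1 + w s ^ 2) * (1 - h s * w s))
      (nhdsWithin b (Set.Iio b)) Filter.atTop := by
  have hs₁b : s₁ < b := hs₁.2
  have hne : (Set.Ioo s₁ b).Nonempty := nonempty_Ioo.2 hs₁b
  -- h positive on Ioo s₁ b
  have hsub : Set.Ioo s₁ b ⊆ Set.Ioo a b := fun s hs =>
    ⟨hs₀.1.trans_le (hs₁.1.trans hs.1.le), hs.2⟩
  have hsub' : Set.Ico s₁ b ⊆ Set.Ico s₀ b := fun s hs => ⟨hs₁.1.trans hs.1, hs.2⟩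
  -- derivative positivity
  have hderiv : ∀ s ∈ Set.Ioo s₁ b, 0 < deriv w s := by
    intro s hs
    have hmem : s ∈ Set.Ico s₀ b := hsub' ⟨hs.1.le, hs.2⟩
    have hnhds : Set.Ico s₀ b ∈ nhds s := by
      refine mem_nhds_iff.2 ⟨Set.Ioo s₀ b, Set.Ioo_subset_Ico_self, isOpen_Ioo,
        ⟨hs₁.1.trans_lt hs.1, hs.2⟩⟩
    have hd : HasDerivAt w ((1 + w s ^ 2) * (1 - h s * w s)) s :=
      (hode s hmem).hasDerivAt hnhds
    rw [hd.deriv]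
    have hws : w s ≤ M := hbound s ⟨hs.1.le, hs.2⟩
    have hhs : 0 < h s := hpos s (hsub hs)
    have hw0 : w s < 0 := hws.trans_lt hM
    have h1 : 0 < 1 - h s * w s := by nlinarith
    have h2 : 0 < 1 + w s ^ 2 := by positivity
    exact mul_pos h2 h1
  have hcont : ContinuousOn w (Set.Ico s₁ b) := (hwC1.continuousOn).mono hsub'
  have hmono : StrictMonoOn w (Set.Ico s₁ b) := by
    apply StrictMonoOn.mono (s := Set.Ico s₁ b) ?_ (subset_refl _)
    exact strictMonoOn_of_deriv_pos (convex_Ico s₁ b) hcont (by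
      rwa [interior_Ico])
  have hmono' : MonotoneOn w (Set.Ioo s₁ b) :=
    (hmono.monotoneOn).mono Set.Ioo_subset_Ico_self
  have hbdd : BddAbove (w '' Set.Ioo s₁ b) := by
    refine ⟨M, fun y hy => ?_⟩
    rcases hy with ⟨s, hs, rfl⟩
    exact hbound s ⟨hs.1.le, hs.2⟩
  have htend := MonotoneOn.tendsto_nhdsWithin_Ioo_left hne hmono' hbdd
  refine ⟨⟨sSup (w '' Set.Ioo s₁ b), ?_, htend⟩, ?_⟩
  · exact csSup_le (hne.image w) (fun y hy => by
      rcases hy with ⟨s, hs, rfl⟩; exact hbound s ⟨hs.1.le, hs.2⟩)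
  · -- w' → +∞
    have h1 : Filter.Tendsto (fun s => 1 - M * h s) (nhdsWithin b (Set.Iio b))
        Filter.atTop := by
      have := hblow.const_mul_atTop (neg_pos.2 hM)
      have h2 : Filter.Tendsto (fun s => (-M) * h s + 1) (nhdsWithin b (Set.Iio b))
          Filter.atTop := tendsto_atTop_add_const_right _ 1 this
      refine h2.congr (fun s => by ring)
    refine tendsto_atTop_mono' _ ?_ h1
    filter_upwards [Ioo_mem_nhdsLT hs₁b] with s hs
    have hws : w s ≤ M := hbound s ⟨hs.1.le, hs.2⟩
    have hhs : 0 < h s := hpos s (hsub hs)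
    have hw0 : w s < 0 := hws.trans_lt hM
    have hA : 1 - h s * M ≤ 1 - h s * w s := by nlinarith
    have hA0 : (0:ℝ) < 1 - h s * w s := by nlinarith
    calc 1 - M * h s = 1 - h s * M := by ring
      _ ≤ 1 - h s * w s := hA
      _ ≤ (1 + w s ^ 2) * (1 - h s * w s) :=
          le_mul_of_one_le_left hA0.le (by nlinarith [sq_nonneg (w s)])
end

section
/- Let s₀ < b < +∞ and let h : [s₀, b) → ℝ be continuously differentiable with h(s) < 0 for all s, satisfying lim_{s → b⁻} h(s) = −∞. Let w : [s₀, b) → ℝ be a continuously differentiable solution of w'(s) = −(1 + w(s)²)·(1 − h(s)·w(s)). If there exist M > 0 and s₁ ∈ [s₀, b) such that w(s) ≥ M for every s ∈ [s₁, b), then there exists w₁ ≥ M with lim_{s → b⁻} w(s) = w₁, and lim_{s → b⁻} w'(s) = −∞. -/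
/-!
Since `h < 0` and `w > 0`, the factor `1 - h w` is at least `1`, so `w' < 0` near `b`:
`w` is decreasing and bounded below by `M`, hence converges to some `w₁ ≥ M > 0`.
Then `h w → −∞`, so `(1 + w²)(1 − h w) → +∞` and `w' → −∞`.
-/

open Set Filter Topology

lemma neg_one_add_sq_mul_one_sub_mul_neg {x y : ℝ} (hxy : x * y ≤ 0) :
    -((1 + y ^ 2) * (1 - x * y)) < 0 := by
  have : 0 < (1 + y ^ 2) * (1 - x * y) := by nlinarith [sq_nonneg y]
  linarith

lemma strictAntiOn_Ioo_of_hasDerivWithinAt_neg {f f' : ℝ → ℝ} {s : Set ℝ} {a b : ℝ}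
    (hs : Ioo a b ⊆ s) (hf : ∀ x ∈ Ioo a b, HasDerivWithinAt f (f' x) s x)
    (hf' : ∀ x ∈ Ioo a b, f' x < 0) : StrictAntiOn f (Ioo a b) := by
  have hf_Ioo : ∀ x ∈ Ioo a b, HasDerivWithinAt f (f' x) (Ioo a b) x :=
    fun x hx => (hf x hx).mono hs
  refine strictAntiOn_of_hasDerivWithinAt_neg (convex_Ioo a b) (f' := f')
    (fun x hx => (hf_Ioo x hx).continuousWithinAt) ?_ ?_ <;> rw [interior_Ioo]
  exacts [hf_Ioo, hf']

lemma AntitoneOn.exists_tendsto_nhdsLT_of_le {f : ℝ → ℝ} {a b M : ℝ} (hab : a < b)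
    (hf : AntitoneOn f (Ioo a b)) (hM : ∀ x ∈ Ioo a b, M ≤ f x) :
    ∃ L, M ≤ L ∧ Tendsto f (𝓝[<] b) (𝓝 L) := by
  have hne : (Ioo a b).Nonempty := nonempty_Ioo.mpr hab
  have hlim := hf.tendsto_nhdsWithin_Ioo_left hne ⟨M, forall_mem_image.mpr hM⟩
  exact ⟨_, ge_of_tendsto hlim (mem_of_superset (Ioo_mem_nhdsLT hab) hM), hlim⟩

lemma tendsto_neg_one_add_sq_mul_one_sub_mul_atBot {α : Type*} {l : Filter α} {h w : α → ℝ}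
    {L : ℝ} (hh : Tendsto h l atBot) (hw : Tendsto w l (𝓝 L)) (hL : 0 < L) :
    Tendsto (fun s => -((1 + w s ^ 2) * (1 - h s * w s))) l atBot := by
  have hhw : Tendsto (fun s => -(h s * w s)) l atTop :=
    tendsto_neg_atBot_atTop.comp (hh.atBot_mul_pos hL hw)
  have hsub : Tendsto (fun s => 1 - h s * w s) l atTop := by
    simpa only [sub_eq_add_neg] using tendsto_atTop_add_const_left l 1 hhw
  exact tendsto_neg_atTop_atBot.comp
    ((tendsto_const_nhds.add (hw.pow 2)).pos_mul_atTop (by positivity) hsub)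

theorem bounded_below_solution_limit_negative_case_general
    (s₀ b : ℝ)
    (h : ℝ → ℝ)
    (hneg : ∀ s ∈ Set.Ico s₀ b, h s < 0)
    (hblow : Filter.Tendsto h (nhdsWithin b (Set.Iio b)) Filter.atBot)
    (w : ℝ → ℝ)
    (hode : ∀ s ∈ Set.Ico s₀ b,
      HasDerivWithinAt w (-((1 + w s ^ 2) * (1 - h s * w s))) (Set.Ico s₀ b) s)
    (M : ℝ) (hM : 0 < M) (s₁ : ℝ) (hs₁ : s₁ ∈ Set.Ico s₀ b)
    (hbound : ∀ s ∈ Set.Ico s₁ b, M ≤ w s) :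
    (∃ w₁ : ℝ, M ≤ w₁ ∧ Filter.Tendsto w (nhdsWithin b (Set.Iio b)) (nhds w₁)) ∧
    Filter.Tendsto (fun s => -((1 + w s ^ 2) * (1 - h s * w s)))
      (nhdsWithin b (Set.Iio b)) Filter.atBot := by
  have hIoo : Ioo s₁ b ⊆ Ico s₀ b := Ioo_subset_Ico_self.trans (Ico_subset_Ico_left hs₁.1)
  have hw_nonneg : ∀ s ∈ Ioo s₁ b, 0 ≤ w s :=
    fun s hs => hM.le.trans (hbound s (Ioo_subset_Ico_self hs))
  have hanti : StrictAntiOn w (Ioo s₁ b) :=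
    strictAntiOn_Ioo_of_hasDerivWithinAt_neg hIoo (fun s hs => hode s (hIoo hs)) fun s hs =>
      neg_one_add_sq_mul_one_sub_mul_neg
        (mul_nonpos_of_nonpos_of_nonneg (hneg s (hIoo hs)).le (hw_nonneg s hs))
  obtain ⟨w₁, hw₁, hlim⟩ := hanti.antitoneOn.exists_tendsto_nhdsLT_of_le hs₁.2
    fun s hs => hbound s (Ioo_subset_Ico_self hs)
  exact ⟨⟨w₁, hw₁, hlim⟩,
    tendsto_neg_one_add_sq_mul_one_sub_mul_atBot hblow hlim (hM.trans_le hw₁)⟩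

/-- If `h ∈ C¹[s₀, b)` is negative, `b < +∞`, `h(s) → −∞` as `s → b⁻`,
and `w` solves `w' = −(1 + w²)(1 − h w)` on `[s₀, b)` with `w ≥ M > 0` near `b`, then
`w` has a finite limit `w₁ ≥ M` at `b⁻` and `w' → −∞` at `b⁻`. -/
theorem bounded_below_solution_limit_negative_case
    (s₀ b : ℝ) (hs₀b : s₀ < b)
    (h : ℝ → ℝ)
    (hC1 : ContDiffOn ℝ 1 h (Set.Ico s₀ b))
    (hneg : ∀ s ∈ Set.Ico s₀ b, h s < 0)
    (hblow : Filter.Tendsto h (nhdsWithin b (Set.Iio b)) Filter.atBot)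
    (w : ℝ → ℝ)
    (hwC1 : ContDiffOn ℝ 1 w (Set.Ico s₀ b))
    (hode : ∀ s ∈ Set.Ico s₀ b,
      HasDerivWithinAt w (-((1 + w s ^ 2) * (1 - h s * w s))) (Set.Ico s₀ b) s)
    (M : ℝ) (hM : 0 < M) (s₁ : ℝ) (hs₁ : s₁ ∈ Set.Ico s₀ b)
    (hbound : ∀ s ∈ Set.Ico s₁ b, M ≤ w s) :
    (∃ w₁ : ℝ, M ≤ w₁ ∧ Filter.Tendsto w (nhdsWithin b (Set.Iio b)) (nhds w₁)) ∧
    Filter.Tendsto (fun s => -((1 + w s ^ 2) * (1 - h s * w s)))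
      (nhdsWithin b (Set.Iio b)) Filter.atBot :=
  bounded_below_solution_limit_negative_case_general s₀ b h hneg hblow w hode M hM s₁ hs₁ hbound
end

section
/- Let s₀ < b < +∞ and let h : [s₀, b) → ℝ be continuously differentiable with h(s) < 0 for all s, satisfying lim_{s → b⁻} h(s) = −∞. Let w : [s₀, b) → ℝ be a continuously differentiable solution of w'(s) = −(1 + w(s)²)·(1 − h(s)·w(s)). If there exist M < 0 and s₁ ∈ [s₀, b) such that w(s) ≤ M for every s ∈ [s₁, b), then there exists w₁ ≤ M with lim_{s → b⁻} w(s) = w₁, and lim_{s → b⁻} w'(s) = +∞. -/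
open Set Filter Topology

/-!
Near `b` the term `h w` is at least `h M → +∞`, so the right-hand side `w'` of the equation
dominates `(1 + M²)(h M - 1) → +∞`. Hence `w` is eventually increasing, and being bounded
above by `M` it converges to some `w₁ ≤ M`.
-/

lemma le_neg_one_add_sq_mul_one_sub_mul {h w M : ℝ} (hwM : w ≤ M) (hM : M ≤ 0)
    (hhM : 1 ≤ h * M) : (1 + M ^ 2) * (h * M - 1) ≤ -((1 + w ^ 2) * (1 - h * w)) := by
  have hh : h ≤ 0 := by
    by_contra! hh
    nlinarith [mul_nonpos_of_nonneg_of_nonpos hh.le hM]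
  have hhw : h * M ≤ h * w := mul_le_mul_of_nonpos_left hwM hh
  have hsq : M ^ 2 ≤ w ^ 2 := by nlinarith
  calc (1 + M ^ 2) * (h * M - 1)
      ≤ (1 + w ^ 2) * (h * M - 1) := by gcongr
    _ ≤ (1 + w ^ 2) * (h * w - 1) := by gcongr
    _ = -((1 + w ^ 2) * (1 - h * w)) := by ring

lemma tendsto_neg_one_add_sq_mul_one_sub_mul_atTop {α : Type*} {l : Filter α} {h w : α → ℝ}
    {M : ℝ} (hh : Tendsto h l atBot) (hM : M < 0) (hw : ∀ᶠ s in l, w s ≤ M) :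
    Tendsto (fun s => -((1 + w s ^ 2) * (1 - h s * w s))) l atTop := by
  have hhM : Tendsto (fun s => h s * M) l atTop := hh.atBot_mul_const_of_neg hM
  have hlower : Tendsto (fun s => (1 + M ^ 2) * (h s * M - 1)) l atTop :=
    (tendsto_atTop_add_const_right _ (-1) hhM).const_mul_atTop (by positivity)
  refine tendsto_atTop_mono' l ?_ hlower
  filter_upwards [hw, hhM.eventually_ge_atTop 1] with s hws hhs
  exact le_neg_one_add_sq_mul_one_sub_mul hws hM.le hhs

lemma eventually_nhdsLT_hasDerivAt_of_hasDerivWithinAt_Ico {f f' : ℝ → ℝ} {a b : ℝ}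
    (hab : a < b) (hf : ∀ s ∈ Ico a b, HasDerivWithinAt f (f' s) (Ico a b) s) :
    ∀ᶠ s in 𝓝[<] b, HasDerivAt f (f' s) s := by
  filter_upwards [Ioo_mem_nhdsLT hab] with s hs
  exact (hf s (Ioo_subset_Ico_self hs)).hasDerivAt (Ico_mem_nhds hs.1 hs.2)

lemma exists_le_tendsto_nhdsLT_of_hasDerivAt_nonneg {f f' : ℝ → ℝ} {b M : ℝ}
    (hf : ∀ᶠ s in 𝓝[<] b, HasDerivAt f (f' s) s) (hf' : ∀ᶠ s in 𝓝[<] b, 0 ≤ f' s)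
    (hM : ∀ᶠ s in 𝓝[<] b, f s ≤ M) : ∃ L ≤ M, Tendsto f (𝓝[<] b) (𝓝 L) := by
  obtain ⟨a, hab, hsub⟩ := mem_nhdsLT_iff_exists_Ioo_subset.1 ((hf.and hf').and hM)
  have hmono : MonotoneOn f (Ioo a b) := by
    refine monotoneOn_of_hasDerivWithinAt_nonneg (f' := f') (convex_Ioo a b)
      (fun s hs => (hsub hs).1.1.continuousAt.continuousWithinAt) ?_ ?_ <;>
      simp only [interior_Ioo]
    · exact fun s hs => (hsub hs).1.1.hasDerivWithinAt
    · exact fun s hs => (hsub hs).1.2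
  have hbdd : BddAbove (f '' Ioo a b) := ⟨M, forall_mem_image.2 fun s hs => (hsub hs).2⟩
  have hlim := hmono.tendsto_nhdsWithin_Ioo_left (nonempty_Ioo.2 hab) hbdd
  exact ⟨_, le_of_tendsto hlim hM, hlim⟩

theorem bounded_above_solution_limit_negative_case_general
    (s₀ b : ℝ) (hs₀b : s₀ < b)
    (h : ℝ → ℝ)
    (hblow : Filter.Tendsto h (nhdsWithin b (Set.Iio b)) Filter.atBot)
    (w : ℝ → ℝ)
    (hode : ∀ s ∈ Set.Ico s₀ b,
      HasDerivWithinAt w (-((1 + w s ^ 2) * (1 - h s * w s))) (Set.Ico s₀ b) s)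
    (M : ℝ) (hM : M < 0) (s₁ : ℝ) (hs₁ : s₁ ∈ Set.Ico s₀ b)
    (hbound : ∀ s ∈ Set.Ico s₁ b, w s ≤ M) :
    (∃ w₁ : ℝ, w₁ ≤ M ∧ Filter.Tendsto w (nhdsWithin b (Set.Iio b)) (nhds w₁)) ∧
    Filter.Tendsto (fun s => -((1 + w s ^ 2) * (1 - h s * w s)))
      (nhdsWithin b (Set.Iio b)) Filter.atTop := by
  have hw : ∀ᶠ s in 𝓝[<] b, w s ≤ M := mem_of_superset (Ico_mem_nhdsLT hs₁.2) hbound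
  have hrhs := tendsto_neg_one_add_sq_mul_one_sub_mul_atTop hblow hM hw
  obtain ⟨w₁, hw₁M, hlim⟩ := exists_le_tendsto_nhdsLT_of_hasDerivAt_nonneg
    (eventually_nhdsLT_hasDerivAt_of_hasDerivWithinAt_Ico hs₀b hode)
    (hrhs.eventually_ge_atTop 0) hw
  exact ⟨⟨w₁, hw₁M, hlim⟩, hrhs⟩

/-- If `h ∈ C¹[s₀, b)` is negative, `b < +∞`, `h(s) → −∞` as `s → b⁻`,
and `w` solves `w' = −(1 + w²)(1 − h w)` on `[s₀, b)` with `w ≤ M < 0` near `b`, then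
`w` has a finite limit `w₁ ≤ M` at `b⁻` and `w' → +∞` at `b⁻`. -/
theorem bounded_above_solution_limit_negative_case
    (s₀ b : ℝ) (hs₀b : s₀ < b)
    (h : ℝ → ℝ)
    (hC1 : ContDiffOn ℝ 1 h (Set.Ico s₀ b))
    (hneg : ∀ s ∈ Set.Ico s₀ b, h s < 0)
    (hblow : Filter.Tendsto h (nhdsWithin b (Set.Iio b)) Filter.atBot)
    (w : ℝ → ℝ)
    (hwC1 : ContDiffOn ℝ 1 w (Set.Ico s₀ b))
    (hode : ∀ s ∈ Set.Ico s₀ b,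
      HasDerivWithinAt w (-((1 + w s ^ 2) * (1 - h s * w s))) (Set.Ico s₀ b) s)
    (M : ℝ) (hM : M < 0) (s₁ : ℝ) (hs₁ : s₁ ∈ Set.Ico s₀ b)
    (hbound : ∀ s ∈ Set.Ico s₁ b, w s ≤ M) :
    (∃ w₁ : ℝ, w₁ ≤ M ∧ Filter.Tendsto w (nhdsWithin b (Set.Iio b)) (nhds w₁)) ∧
    Filter.Tendsto (fun s => -((1 + w s ^ 2) * (1 - h s * w s)))
      (nhdsWithin b (Set.Iio b)) Filter.atTop :=
  bounded_above_solution_limit_negative_case_general s₀ b hs₀b h hblow w hode M hM s₁ hs₁ hbound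
end

section
/- Let n ≥ 2 be an integer, let K₀ = (1/(1+(n−1)²))·((n−1)·ln(n−1) + π/2), and let F₁ : (−1/(n−1), +∞) → (−∞, K₀) be the bijection F₁(t) = (1/(1+(n−1)²))·[(n−1)·ln((1+(n−1)t)/√(1+t²)) + arctan t]. Then the inverse function w = F₁⁻¹ : (−∞, K₀) → (−1/(n−1), +∞) is differentiable and satisfies w'(s) = (1 + w(s)²)·(1 + (n−1)·w(s)) for every s ∈ (−∞, K₀), with lim_{s → −∞} w(s) = −1/(n−1) and lim_{s → K₀⁻} w(s) = +∞. -/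
open Set Filter Real Topology

/-! The first integral `F₁` has derivative `1 / ((1 + t²)(1 + (n−1)t)) > 0` on `(−1/(n−1), ∞)`,
so it is strictly increasing there, and its inverse `w` solves the ODE by the inverse function
rule. The limits of `w` at `−∞` and at `K₀⁻` only use that `w` is the increasing inverse of a
strictly increasing map `(−1/(n−1), ∞) → (−∞, K₀)`: `w s < t ↔ s < F₁ t`. -/

section InverseOfStrictMonoOn

variable {f g : ℝ → ℝ} {a b : ℝ}

theorem lt_iff_lt_apply_of_rightInvOn (hf : StrictMonoOn f (Ioi a))
    (hg : MapsTo g (Iio b) (Ioi a)) (hinv : RightInvOn g f (Iio b))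
    {s t : ℝ} (hs : s < b) (ht : a < t) : g s < t ↔ s < f t := by
  conv_rhs => rw [← hinv hs]
  exact (hf.lt_iff_lt (hg hs) ht).symm

theorem strictMonoOn_of_rightInvOn (hf : StrictMonoOn f (Ioi a))
    (hg : MapsTo g (Iio b) (Ioi a)) (hinv : RightInvOn g f (Iio b)) :
    StrictMonoOn g (Iio b) := fun _ hs₁ s₂ hs₂ hlt =>
  (lt_iff_lt_apply_of_rightInvOn hf hg hinv hs₁ (hg hs₂)).2 (by rwa [hinv hs₂])

theorem continuousAt_of_invOn (hf : StrictMonoOn f (Ioi a)) (hfm : MapsTo f (Ioi a) (Iio b))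
    (hg : MapsTo g (Iio b) (Ioi a)) (hinv : InvOn g f (Ioi a) (Iio b)) {s : ℝ} (hs : s < b) :
    ContinuousAt g s := by
  have himage : Ioi a ⊆ g '' Iio b := fun t ht => ⟨f t, hfm ht, hinv.1 ht⟩
  exact (strictMonoOn_of_rightInvOn hf hg hinv.2).continuousAt_of_image_mem_nhds
    (Iio_mem_nhds hs) (mem_of_superset (Ioi_mem_nhds (hg hs)) himage)

theorem hasDerivAt_of_invOn (hf : StrictMonoOn f (Ioi a)) (hfm : MapsTo f (Ioi a) (Iio b))
    (hg : MapsTo g (Iio b) (Ioi a)) (hinv : InvOn g f (Ioi a) (Iio b)) {s f' : ℝ} (hs : s < b)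
    (hf' : HasDerivAt f f' (g s)) (hf'0 : f' ≠ 0) : HasDerivAt g f'⁻¹ s :=
  hf'.of_local_left_inverse (continuousAt_of_invOn hf hfm hg hinv hs) hf'0
    (eventually_of_mem (Iio_mem_nhds hs) fun _ hy => hinv.2 hy)

theorem tendsto_atBot_of_rightInvOn (hf : StrictMonoOn f (Ioi a))
    (hg : MapsTo g (Iio b) (Ioi a)) (hinv : RightInvOn g f (Iio b)) :
    Tendsto g atBot (𝓝 a) := by
  refine tendsto_order.2 ⟨fun c hc => ?_, fun c hc => ?_⟩
  · filter_upwards [eventually_lt_atBot b] with s hs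
    exact hc.trans (hg hs)
  · obtain ⟨t, hat, htc⟩ := exists_between hc
    filter_upwards [eventually_lt_atBot b, eventually_lt_atBot (f t)] with s hsb hst
    exact ((lt_iff_lt_apply_of_rightInvOn hf hg hinv hsb hat).2 hst).trans htc

theorem tendsto_nhdsLT_atTop_of_rightInvOn (hf : StrictMonoOn f (Ioi a))
    (hfm : MapsTo f (Ioi a) (Iio b)) (hg : MapsTo g (Iio b) (Ioi a))
    (hinv : RightInvOn g f (Iio b)) : Tendsto g (𝓝[<] b) atTop := by
  refine tendsto_atTop.2 fun c => ?_
  have hat : a < max c (a + 1) := (lt_add_one a).trans_le (le_max_right c _)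
  filter_upwards [Ioo_mem_nhdsLT (hfm hat)] with s ⟨hts, hsb⟩
  have hle : max c (a + 1) ≤ g s :=
    not_lt.1 fun h => ((lt_iff_lt_apply_of_rightInvOn hf hg hinv hsb hat).1 h).not_gt hts
  exact (le_max_left c _).trans hle

end InverseOfStrictMonoOn

noncomputable def firstIntegral (m t : ℝ) : ℝ :=
  (1 / (1 + m ^ 2)) * (m * log ((1 + m * t) / √(1 + t ^ 2)) + arctan t)

theorem firstIntegral_eq_of_pos {m t : ℝ} (ht : 0 < 1 + m * t) :
    firstIntegral m t =
      (1 / (1 + m ^ 2)) * (m * (log (1 + m * t) - log (1 + t ^ 2) / 2) + arctan t) := by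
  have h : 0 < 1 + t ^ 2 := by positivity
  rw [firstIntegral, log_div ht.ne' (sqrt_pos.2 h).ne', log_sqrt h.le]

theorem hasDerivAt_firstIntegral {m t : ℝ} (ht : 0 < 1 + m * t) :
    HasDerivAt (firstIntegral m) ((1 + t ^ 2) * (1 + m * t))⁻¹ t := by
  have hsq : 0 < 1 + t ^ 2 := by positivity
  have hlin : HasDerivAt (fun x => 1 + m * x) m t := by
    simpa using ((hasDerivAt_id t).const_mul m).const_add 1
  have hquad : HasDerivAt (fun x => 1 + x ^ 2) (2 * t) t := by
    simpa using (hasDerivAt_pow 2 t).const_add 1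
  have hexpr := ((((hlin.log ht.ne').sub ((hquad.log hsq.ne').div_const 2)).const_mul m).add
    (hasDerivAt_arctan t)).const_mul (1 / (1 + m ^ 2))
  have hloc : (fun x => (1 / (1 + m ^ 2)) *
      (m * (log (1 + m * x) - log (1 + x ^ 2) / 2) + arctan x)) =ᶠ[𝓝 t] firstIntegral m :=
    eventually_of_mem ((continuous_const.add (continuous_const.mul continuous_id)).continuousAt
      |>.preimage_mem_nhds (Ioi_mem_nhds ht)) fun x hx => (firstIntegral_eq_of_pos hx).symm
  refine (hexpr.congr_of_eventuallyEq hloc.symm).congr_deriv ?_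
  field_simp
  ring

theorem one_add_mul_pos_of_mem_Ioi {m t : ℝ} (hm : 0 < m) (ht : t ∈ Ioi (-1 / m)) :
    0 < 1 + m * t := by
  have := (div_lt_iff₀' hm).1 ht
  linarith

theorem strictMonoOn_firstIntegral {m : ℝ} (hm : 0 < m) :
    StrictMonoOn (firstIntegral m) (Ioi (-1 / m)) := by
  have hderiv : ∀ t ∈ Ioi (-1 / m), HasDerivAt (firstIntegral m) _ t :=
    fun t ht => hasDerivAt_firstIntegral (one_add_mul_pos_of_mem_Ioi hm ht)
  refine strictMonoOn_of_deriv_pos (convex_Ioi _)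
    (fun t ht => (hderiv t ht).continuousAt.continuousWithinAt) fun t ht => ?_
  rw [interior_Ioi] at ht
  rw [(hderiv t ht).deriv]
  have := one_add_mul_pos_of_mem_Ioi hm ht
  positivity

theorem inverse_first_integral_solves_ODE_general
    (n : ℕ) (hn : 2 ≤ n) (F₁ : ℝ → ℝ) (K₀ : ℝ)
    (hF : ∀ t : ℝ, F₁ t = (1 / (1 + ((n : ℝ) - 1) ^ 2)) *
      (((n : ℝ) - 1) * Real.log ((1 + ((n : ℝ) - 1) * t) / Real.sqrt (1 + t ^ 2))
        + Real.arctan t))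
    (hBij : Set.BijOn F₁ (Set.Ioi (-1 / ((n : ℝ) - 1))) (Set.Iio K₀))
    (w : ℝ → ℝ)
    (hwmaps : Set.MapsTo w (Set.Iio K₀) (Set.Ioi (-1 / ((n : ℝ) - 1))))
    (hwinv : Set.InvOn w F₁ (Set.Ioi (-1 / ((n : ℝ) - 1))) (Set.Iio K₀)) :
    (∀ s ∈ Set.Iio K₀,
      HasDerivAt w ((1 + w s ^ 2) * (1 + ((n : ℝ) - 1) * w s)) s) ∧
    Filter.Tendsto w Filter.atBot (nhds (-1 / ((n : ℝ) - 1))) ∧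
    Filter.Tendsto w (nhdsWithin K₀ (Set.Iio K₀)) Filter.atTop := by
  have hm : (0 : ℝ) < (n : ℝ) - 1 := by
    have : (2 : ℝ) ≤ n := by exact_mod_cast hn
    linarith
  obtain rfl : F₁ = firstIntegral ((n : ℝ) - 1) := funext hF
  have hmono := strictMonoOn_firstIntegral hm
  refine ⟨fun s hs => ?_, tendsto_atBot_of_rightInvOn hmono hwmaps hwinv.2,
    tendsto_nhdsLT_atTop_of_rightInvOn hmono hBij.mapsTo hwmaps hwinv.2⟩
  have hpos := one_add_mul_pos_of_mem_Ioi hm (hwmaps hs)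
  simpa using hasDerivAt_of_invOn hmono hBij.mapsTo hwmaps hwinv hs
    (hasDerivAt_firstIntegral hpos) (by positivity)

/-- The inverse `w = F₁⁻¹ : (−∞, K₀) → (−1/(n−1), +∞)` of the first
integral `F₁` is differentiable, solves `w' = (1 + w²)(1 + (n−1)w)`, tends to
`−1/(n−1)` at `−∞` and blows up to `+∞` at `K₀⁻`. -/
theorem inverse_first_integral_solves_ODE
    (n : ℕ) (hn : 2 ≤ n) (F₁ : ℝ → ℝ) (K₀ : ℝ)
    (hF : ∀ t : ℝ, F₁ t = (1 / (1 + ((n : ℝ) - 1) ^ 2)) *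
      (((n : ℝ) - 1) * Real.log ((1 + ((n : ℝ) - 1) * t) / Real.sqrt (1 + t ^ 2))
        + Real.arctan t))
    (hK : K₀ = (1 / (1 + ((n : ℝ) - 1) ^ 2)) *
      (((n : ℝ) - 1) * Real.log ((n : ℝ) - 1) + Real.pi / 2))
    (hBij : Set.BijOn F₁ (Set.Ioi (-1 / ((n : ℝ) - 1))) (Set.Iio K₀))
    (w : ℝ → ℝ)
    (hwmaps : Set.MapsTo w (Set.Iio K₀) (Set.Ioi (-1 / ((n : ℝ) - 1))))
    (hwinv : Set.InvOn w F₁ (Set.Ioi (-1 / ((n : ℝ) - 1))) (Set.Iio K₀)) :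
    (∀ s ∈ Set.Iio K₀,
      HasDerivAt w ((1 + w s ^ 2) * (1 + ((n : ℝ) - 1) * w s)) s) ∧
    Filter.Tendsto w Filter.atBot (nhds (-1 / ((n : ℝ) - 1))) ∧
    Filter.Tendsto w (nhdsWithin K₀ (Set.Iio K₀)) Filter.atTop :=
  inverse_first_integral_solves_ODE_general n hn F₁ K₀ hF hBij w hwmaps hwinv
end

section
/- Let n ≥ 2 be an integer. For every w₀ ∈ ℝ there exists a continuously differentiable function w : (−π/2, π/2) → ℝ with w(0) = w₀ satisfying w'(s) = (1 + w(s)²)·(1 − (n−1)·tan(s)·w(s)) for every s ∈ (−π/2, π/2). -/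
/-!
Clamping the nonlinearity at a height `R` gives a field that is Lipschitz in `w` on every compact
subinterval of `(-π/2, π/2)`, so Picard–Lindelöf and uniqueness yield a solution of the clamped
equation on the whole interval. For `s ≥ 0` this solution never drops below `min w₀ 0`, because
`w' > 0` wherever `w ≤ 0`; and `arctan w` grows with rate at most `1` while `w ≥ 0`, until the term
`-(n-1) tan s · w` takes over and pushes `w` down. This bounds `w` by a constant depending only on
`w₀` and `n`, and the symmetry `w(s) ↦ -w(-s)` of the equation gives the same bound for `s ≤ 0`.
Choosing `R` above that bound, the clamp is never active.
-/

open Set Filter Real Topology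
open scoped NNReal

section GlobalSolution

variable {E : Type*} [NormedAddCommGroup E] [NormedSpace ℝ E]

theorem exists_eq_forall_mem_Ioo_hasDerivAt_of_lipschitzWith [CompleteSpace E]
    {v : ℝ → E → E} {a b t₀ L : ℝ} {K : ℝ≥0} (ht₀ : t₀ ∈ Icc a b)
    (hlip : ∀ t ∈ Icc a b, LipschitzWith K (v t))
    (hcont : ∀ x, ContinuousOn (v · x) (Icc a b))
    (hbdd : ∀ t ∈ Icc a b, ∀ x, ‖v t x‖ ≤ L) (x₀ : E) :
    ∃ f : ℝ → E, f t₀ = x₀ ∧ ∀ t ∈ Ioo a b, HasDerivAt f (v t (f t)) t := by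
  have hpl : IsPicardLindelof v (⟨t₀, ht₀⟩ : Icc a b) x₀
      (L.toNNReal * (b - a).toNNReal) 0 L.toNNReal K :=
    { lipschitzOnWith := fun t ht => (hlip t ht).lipschitzOnWith
      continuousOn := fun x _ => hcont x
      norm_le := fun t ht x _ => (hbdd t ht x).trans (Real.le_coe_toNNReal L)
      mul_max_le := by
        rw [NNReal.coe_zero, sub_zero, NNReal.coe_mul,
          Real.coe_toNNReal (b - a) (by linarith [ht₀.1, ht₀.2])]
        gcongr
        exact max_le (sub_le_sub_left ht₀.1 b) (sub_le_sub_right ht₀.2 a) }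
  obtain ⟨f, hf₀, hf⟩ := hpl.exists_eq_forall_mem_Icc_hasDerivWithinAt₀
  exact ⟨f, hf₀, fun t ht => (hf t (Ioo_subset_Icc_self ht)).hasDerivAt (Icc_mem_nhds ht.1 ht.2)⟩

theorem exists_eq_forall_mem_Ioo_hasDerivAt_of_subintervals {v : ℝ → E → E} {c : ℝ} {x₀ : E}
    (hc : 0 < c) (hlip : ∀ a ∈ Ioo 0 c, ∃ K, ∀ t ∈ Ioo (-a) a, LipschitzWith K (v t))
    (hsol : ∀ a ∈ Ioo 0 c,
      ∃ f : ℝ → E, f 0 = x₀ ∧ ∀ t ∈ Ioo (-a) a, HasDerivAt f (v t (f t)) t) :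
    ∃ f : ℝ → E, f 0 = x₀ ∧ ∀ t ∈ Ioo (-c) c, HasDerivAt f (v t (f t)) t := by
  choose! sol hsol₀ hsol' using hsol
  have hagree : ∀ a ∈ Ioo 0 c, ∀ b ∈ Ioo 0 c, EqOn (sol a) (sol b) (Ioo (-min a b) (min a b)) := by
    intro a ha b hb
    have hab : min a b ∈ Ioo 0 c := ⟨lt_min ha.1 hb.1, min_lt_of_left_lt ha.2⟩
    obtain ⟨K, hK⟩ := hlip _ hab
    refine ODE_solution_unique_of_mem_Ioo (s := fun _ => univ)
      (fun t ht => (hK t ht).lipschitzOnWith) ⟨neg_lt_zero.2 hab.1, hab.1⟩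
      (fun t ht => ⟨hsol' a ha t ⟨?_, ?_⟩, trivial⟩) (fun t ht => ⟨hsol' b hb t ⟨?_, ?_⟩, trivial⟩)
      ((hsol₀ a ha).trans (hsol₀ b hb).symm)
    all_goals linarith [ht.1, ht.2, min_le_left a b, min_le_right a b]
  set ρ : ℝ → ℝ := fun t => (|t| + c) / 2
  have hρ : ∀ t ∈ Ioo (-c) c, ρ t ∈ Ioo 0 c ∧ t ∈ Ioo (-ρ t) (ρ t) := by
    intro t ht
    have := abs_lt.2 ht
    refine ⟨⟨?_, ?_⟩, abs_lt.1 ?_⟩ <;> simp only [ρ] <;> linarith [abs_nonneg t]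
  refine ⟨fun t => sol (ρ t) t, by simpa [ρ] using hsol₀ (c / 2) ⟨by linarith, by linarith⟩,
    fun t ht => ?_⟩
  obtain ⟨ha, hta⟩ := hρ t ht
  have hloc : (fun s => sol (ρ s) s) =ᶠ[𝓝 t] sol (ρ t) := by
    filter_upwards [Ioo_mem_nhds hta.1 hta.2] with s hs
    have hsc : s ∈ Ioo (-c) c := ⟨by linarith [hs.1, ha.2], by linarith [hs.2, ha.2]⟩
    obtain ⟨hb, hsb⟩ := hρ s hsc
    exact hagree _ hb _ ha ⟨neg_lt.2 (lt_min (neg_lt.1 hsb.1) (neg_lt.1 hs.1)), lt_min hsb.2 hs.2⟩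
  exact (hsol' _ ha t hta).congr_of_eventuallyEq hloc

end GlobalSolution

theorem contDiffOn_one_of_hasDerivAt {𝕜 F : Type*} [NontriviallyNormedField 𝕜]
    [NormedAddCommGroup F] [NormedSpace 𝕜 F] {f f' : 𝕜 → F} {s : Set 𝕜} (hs : IsOpen s)
    (hf : ∀ x ∈ s, HasDerivAt f (f' x) x) (hf' : ContinuousOn f' s) : ContDiffOn 𝕜 1 f s := by
  rw [contDiffOn_one_iff_derivWithin hs.uniqueDiffOn]
  refine ⟨fun x hx => (hf x hx).differentiableAt.differentiableWithinAt,
    hf'.congr fun x hx => ?_⟩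
  rw [derivWithin_of_isOpen hs hx, (hf x hx).deriv]

theorem image_le_of_hasDerivAt_lt_deriv_boundary_Ico {f f' B B' : ℝ → ℝ} {a b : ℝ}
    (hf : ∀ x ∈ Ico a b, HasDerivAt f (f' x) x) (ha : f a ≤ B a)
    (hB : ∀ x, HasDerivAt B (B' x) x) (bound : ∀ x ∈ Ico a b, f x = B x → f' x < B' x) :
    ∀ x ∈ Ico a b, f x ≤ B x := by
  intro x hx
  have hsub : Icc a x ⊆ Ico a b := fun y hy => ⟨hy.1, hy.2.trans_lt hx.2⟩
  exact image_le_of_deriv_right_lt_deriv_boundary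
    (HasDerivAt.continuousOn fun y hy => hf y (hsub hy))
    (fun y hy => (hf y (hsub (Ico_subset_Icc_self hy))).hasDerivWithinAt) ha hB
    (fun y hy => bound y (hsub (Ico_subset_Icc_self hy))) ⟨hx.1, le_rfl⟩

theorem le_tan_of_arctan_le {x y : ℝ} (h : arctan x ≤ y) (hy : y < π / 2) : x ≤ tan y := by
  have hx := arctan_mem_Ioo x
  simpa only [tan_arctan] using strictMonoOn_tan.monotoneOn hx ⟨hx.1.trans_le h, hy⟩ h

section Clamp

def clamp (R x : ℝ) : ℝ := max (-R) (min R x)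

variable {R x : ℝ}

theorem lipschitzWith_clamp (R : ℝ) : LipschitzWith 1 (clamp R) :=
  (LipschitzWith.id.const_min R).const_max (-R)

theorem abs_clamp_le (hR : 0 ≤ R) (x : ℝ) : |clamp R x| ≤ R :=
  abs_le.2 ⟨le_max_left _ _, max_le (by linarith) (min_le_left _ _)⟩

theorem clamp_eq_self (h : |x| ≤ R) : clamp R x = x := by
  rw [clamp, min_eq_right (abs_le.1 h).2, max_eq_right (abs_le.1 h).1]

theorem clamp_neg (hR : 0 ≤ R) (x : ℝ) : clamp R (-x) = -clamp R x := by
  simp only [clamp, max_def, min_def]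
  split_ifs <;> linarith

theorem clamp_mem_Icc_of_nonneg (hR : 0 ≤ R) (hx : 0 ≤ x) : clamp R x ∈ Icc 0 x :=
  ⟨le_max_of_le_right (le_min hR hx), max_le (by linarith) (min_le_right _ _)⟩

theorem clamp_nonpos (hR : 0 ≤ R) (hx : x ≤ 0) : clamp R x ≤ 0 :=
  max_le (neg_nonpos.2 hR) ((min_le_right _ _).trans hx)

end Clamp

section SolitonField

noncomputable def solitonField (m s x : ℝ) : ℝ := (1 + x ^ 2) * (1 - m * tan s * x)

variable {m s x : ℝ}

theorem solitonField_neg (m s x : ℝ) : solitonField m (-s) (-x) = solitonField m s x := by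
  simp only [solitonField, tan_neg]
  ring

theorem solitonField_pos_of_nonpos (hm : 0 ≤ m) (hs : 0 ≤ tan s) (hx : x ≤ 0) :
    0 < solitonField m s x := by
  have : 0 ≤ m * tan s * -x := mul_nonneg (mul_nonneg hm hs) (neg_nonneg.2 hx)
  exact mul_pos (by positivity) (by linarith)

theorem solitonField_le_one_add_sq (hm : 0 ≤ m) (hs : 0 ≤ tan s) (hx : 0 ≤ x) :
    solitonField m s x ≤ 1 + x ^ 2 := by
  have : 0 ≤ m * tan s * x := by positivity
  exact mul_le_of_le_one_right (by positivity) (by linarith)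

theorem solitonField_neg_of_one_lt (h : 1 < m * tan s * x) : solitonField m s x < 0 :=
  mul_neg_of_pos_of_neg (by positivity) (by linarith)

theorem abs_solitonField_le {C R : ℝ} (hC : |m * tan s| ≤ C) (hx : |x| ≤ R) :
    |solitonField m s x| ≤ (1 + R ^ 2) * (1 + C * R) := by
  have hx2 : x ^ 2 ≤ R ^ 2 := sq_le_sq' (abs_le.1 hx).1 (abs_le.1 hx).2
  have h2 : |1 - m * tan s * x| ≤ 1 + C * R := calc
    |1 - m * tan s * x| ≤ 1 + |m * tan s| * |x| := by
      simpa [abs_mul] using abs_sub (1 : ℝ) (m * tan s * x)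
    _ ≤ 1 + C * R := by gcongr; exact (abs_nonneg _).trans hC
  rw [solitonField, abs_mul, abs_of_pos (by positivity)]
  gcongr

theorem lipschitzOnWith_solitonField {C R : ℝ} (hR : 0 ≤ R) (hC : |m * tan s| ≤ C) :
    LipschitzOnWith (2 * R + C * (1 + 3 * R ^ 2)).toNNReal (solitonField m s) (Icc (-R) R) := by
  refine LipschitzOnWith.of_dist_le_mul fun x hx y hy => ?_
  have hxR : |x| ≤ R := abs_le.2 hx
  have hyR : |y| ≤ R := abs_le.2 hy
  have hq : 0 ≤ 1 + x ^ 2 + x * y + y ^ 2 := by nlinarith [sq_nonneg (x + y)]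
  have hq' : 1 + x ^ 2 + x * y + y ^ 2 ≤ 1 + 3 * R ^ 2 := by
    have hxy : x * y ≤ R ^ 2 := by
      rw [sq]
      exact (le_abs_self _).trans (abs_mul x y ▸ mul_le_mul hxR hyR (abs_nonneg y) hR)
    linarith [sq_le_sq' hx.1 hx.2, sq_le_sq' hy.1 hy.2]
  have hfactor : |(x + y) - m * tan s * (1 + x ^ 2 + x * y + y ^ 2)| ≤
      2 * R + C * (1 + 3 * R ^ 2) := calc
    _ ≤ |x + y| + |m * tan s| * (1 + x ^ 2 + x * y + y ^ 2) := by
      exact (abs_sub _ _).trans_eq (by rw [abs_mul, abs_of_nonneg hq])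
    _ ≤ 2 * R + C * (1 + 3 * R ^ 2) := by
      gcongr
      · linarith [abs_add_le x y]
      · exact (abs_nonneg _).trans hC
  rw [Real.dist_eq, Real.dist_eq, Real.coe_toNNReal _ ((abs_nonneg _).trans hfactor),
    show solitonField m s x - solitonField m s y =
      (x - y) * ((x + y) - m * tan s * (1 + x ^ 2 + x * y + y ^ 2)) by
        simp only [solitonField]; ring,
    abs_mul, mul_comm]
  gcongr

theorem continuousOn_solitonField {m : ℝ} {w : ℝ → ℝ} {S : Set ℝ}
    (hS : S ⊆ Ioo (-(π / 2)) (π / 2)) (hw : ContinuousOn w S) :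
    ContinuousOn (fun s => solitonField m s (w s)) S :=
  (continuousOn_const.add (hw.pow 2)).mul (continuousOn_const.sub
    ((continuousOn_const.mul (continuousOn_tan_Ioo.mono hS)).mul hw))

end SolitonField

def IsClampedSolitonSolution (m R : ℝ) (w : ℝ → ℝ) (I : Set ℝ) : Prop :=
  ∀ s ∈ I, HasDerivAt w (solitonField m s (clamp R (w s))) s

theorem exists_isClampedSolitonSolution (m : ℝ) {R : ℝ} (hR : 0 ≤ R) (w₀ : ℝ) :
    ∃ w : ℝ → ℝ, w 0 = w₀ ∧ IsClampedSolitonSolution m R w (Ioo (-(π / 2)) (π / 2)) := by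
  have hsub : ∀ a ∈ Ioo 0 (π / 2), Icc (-a) a ⊆ Ioo (-(π / 2)) (π / 2) :=
    fun a ha => Icc_subset_Ioo (by linarith [ha.2]) ha.2
  have htan : ∀ a ∈ Ioo 0 (π / 2), ∃ C, ∀ t ∈ Icc (-a) a, |m * tan t| ≤ C := fun a ha =>
    isCompact_Icc.exists_bound_of_continuousOn
      (continuousOn_const.mul (continuousOn_tan_Ioo.mono (hsub a ha)))
  have hlip : ∀ a ∈ Ioo 0 (π / 2), ∃ K, ∀ t ∈ Icc (-a) a,
      LipschitzWith K fun x => solitonField m t (clamp R x) := by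
    intro a ha
    obtain ⟨C, hC⟩ := htan a ha
    refine ⟨(2 * R + C * (1 + 3 * R ^ 2)).toNNReal, fun t ht => lipschitzOnWith_univ.1 ?_⟩
    simpa only [mul_one, Function.comp_def] using (lipschitzOnWith_solitonField hR (hC t ht)).comp
      ((lipschitzWith_clamp R).lipschitzOnWith (s := univ)) fun x _ => abs_le.1 (abs_clamp_le hR x)
  refine exists_eq_forall_mem_Ioo_hasDerivAt_of_subintervals (by positivity)
    (fun a ha => (hlip a ha).imp fun K hK t ht => hK t (Ioo_subset_Icc_self ht))
    fun a ha => ?_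
  obtain ⟨K, hK⟩ := hlip a ha
  obtain ⟨C, hC⟩ := htan a ha
  exact exists_eq_forall_mem_Ioo_hasDerivAt_of_lipschitzWith ⟨by linarith [ha.1], ha.1.le⟩ hK
    (fun x => continuousOn_solitonField (hsub a ha) continuousOn_const)
    (fun t ht x => abs_solitonField_le (hC t ht) (abs_clamp_le hR x)) w₀

-- Up to time `δ = (π / 2 - T) / 4` the angle `arctan w` stays below `T + 2δ = (T + π / 2) / 2`;
-- from then on `m tan s w > 1` as soon as `w ≥ 2 / (m tan δ)`, so the field points downwards.
noncomputable def solitonBound (m T : ℝ) : ℝ :=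
  max (tan ((T + π / 2) / 2)) (2 / (m * tan ((π / 2 - T) / 4)))

namespace IsClampedSolitonSolution

variable {m R : ℝ} {w : ℝ → ℝ} {I : Set ℝ}

theorem mono {J : Set ℝ} (hw : IsClampedSolitonSolution m R w I) (hJ : J ⊆ I) :
    IsClampedSolitonSolution m R w J :=
  fun s hs => hw s (hJ hs)

theorem neg_comp_neg (hw : IsClampedSolitonSolution m R w (Ioo (-(π / 2)) (π / 2)))
    (hR : 0 ≤ R) : IsClampedSolitonSolution m R (fun s => -w (-s)) (Ioo (-(π / 2)) (π / 2)) := by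
  intro s hs
  have h : HasDerivAt (fun s => -w (-s)) _ s :=
    ((hw (-s) ⟨neg_lt_neg hs.2, by linarith [hs.1]⟩).comp s (hasDerivAt_neg s)).neg
  rw [clamp_neg hR, ← solitonField_neg, neg_neg]
  simpa using h

theorem min_le (hw : IsClampedSolitonSolution m R w (Ico 0 (π / 2))) (hm : 0 ≤ m) (hR : 0 ≤ R) :
    ∀ s ∈ Ico 0 (π / 2), min (w 0) 0 ≤ w s := by
  have key := image_le_of_hasDerivAt_lt_deriv_boundary_Ico (f := fun s => -w s)
    (B := fun _ => -min (w 0) 0) (fun s hs => (hw s hs).neg) (neg_le_neg (min_le_left (w 0) 0))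
    (fun _ => hasDerivAt_const _ _) fun s hs heq => ?_
  · exact fun s hs => neg_le_neg_iff.1 (key s hs)
  · have hws : w s ≤ 0 := by linarith [min_le_right (w 0) 0]
    have htan := tan_nonneg_of_nonneg_of_le_pi_div_two hs.1 hs.2.le
    exact neg_neg_of_pos (solitonField_pos_of_nonpos hm htan (clamp_nonpos hR hws))

theorem arctan_le {T : ℝ} (hw : IsClampedSolitonSolution m R w (Ico 0 (π / 2))) (hm : 0 ≤ m)
    (hR : 0 ≤ R) (hT : 0 ≤ T) (h₀ : arctan (w 0) ≤ T) :
    ∀ s ∈ Ico 0 (π / 2), arctan (w s) ≤ T + 2 * s := by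
  refine image_le_of_hasDerivAt_lt_deriv_boundary_Ico (fun s hs => (hw s hs).arctan)
    (by simpa using h₀) (fun s => ((hasDerivAt_id' s).const_mul 2).const_add T)
    fun s hs heq => ?_
  have hws : 0 ≤ w s := arctan_nonneg.1 (heq ▸ by linarith [hs.1])
  obtain ⟨hy₀, hyw⟩ := clamp_mem_Icc_of_nonneg hR hws
  have htan := tan_nonneg_of_nonneg_of_le_pi_div_two hs.1 hs.2.le
  calc 1 / (1 + w s ^ 2) * solitonField m s (clamp R (w s))
      ≤ 1 / (1 + w s ^ 2) * (1 + w s ^ 2) := by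
        gcongr
        exact (solitonField_le_one_add_sq hm htan hy₀).trans (by gcongr)
    _ = 1 := by field_simp
    _ < 2 * 1 := by norm_num

theorem le_of_one_lt_mul_tan_mul {M δ : ℝ} (hw : IsClampedSolitonSolution m R w (Ico δ (π / 2)))
    (hm : 0 ≤ m) (hM : 0 ≤ M) (hMR : M ≤ R) (hδ : 0 ≤ δ) (hmδ : 1 < m * tan δ * M)
    (hδM : w δ ≤ M) : ∀ s ∈ Ico δ (π / 2), w s ≤ M := by
  refine image_le_of_hasDerivAt_lt_deriv_boundary_Ico hw hδM (fun _ => hasDerivAt_const _ M)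
    fun s hs heq => ?_
  rw [heq, clamp_eq_self (by rwa [abs_of_nonneg hM])]
  have htan : tan δ ≤ tan s := strictMonoOn_tan.monotoneOn
    ⟨by linarith [pi_pos], hs.1.trans_lt hs.2⟩ ⟨by linarith [pi_pos, hs.1], hs.2⟩ hs.1
  exact solitonField_neg_of_one_lt (hmδ.trans_le (by gcongr))

theorem le_solitonBound {T : ℝ} (hw : IsClampedSolitonSolution m R w (Ico 0 (π / 2)))
    (hm : 0 < m) (hT : 0 ≤ T) (hTπ : T < π / 2) (hR : solitonBound m T ≤ R)
    (h₀ : arctan (w 0) ≤ T) : ∀ s ∈ Ico 0 (π / 2), w s ≤ solitonBound m T := by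
  set δ := (π / 2 - T) / 4 with hδ_def
  have hδ : 0 < δ := by linarith
  have htanδ : 0 < tan δ := tan_pos_of_pos_of_lt_pi_div_two hδ (by linarith)
  have hM : 0 ≤ solitonBound m T := le_max_of_le_right (by positivity)
  have hearly : ∀ s ∈ Icc 0 δ, w s ≤ solitonBound m T := fun s hs =>
    (le_tan_of_arctan_le ((hw.arctan_le hm.le (hM.trans hR) hT h₀ s
      ⟨hs.1, by linarith [hs.2]⟩).trans (by linarith [hs.2])) (by linarith)).trans
      (le_max_left _ _)
  intro s hs
  rcases le_total s δ with hsδ | hδs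
  · exact hearly s ⟨hs.1, hsδ⟩
  · refine (hw.mono (Ico_subset_Ico_left hδ.le)).le_of_one_lt_mul_tan_mul hm.le hM hR hδ.le ?_
      (hearly δ ⟨hδ.le, le_rfl⟩) s ⟨hδs, hs.2⟩
    calc 1 < 2 := one_lt_two
      _ = m * tan δ * (2 / (m * tan δ)) := by field_simp
      _ ≤ m * tan δ * solitonBound m T := by gcongr; exact le_max_right _ _

theorem abs_le_of_Ico (hw : IsClampedSolitonSolution m R w (Ico 0 (π / 2))) (hm : 0 < m)
    (hR : max (solitonBound m |arctan (w 0)|) |w 0| ≤ R) :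
    ∀ s ∈ Ico 0 (π / 2), |w s| ≤ R := by
  have hw₀R : |w 0| ≤ R := (le_max_right _ _).trans hR
  have hMR : solitonBound m |arctan (w 0)| ≤ R := (le_max_left _ _).trans hR
  intro s hs
  refine abs_le.2 ⟨?_, ?_⟩
  · have := hw.min_le hm.le ((abs_nonneg _).trans hw₀R) s hs
    linarith [le_min (neg_abs_le (w 0)) (neg_nonpos.2 (abs_nonneg (w 0)))]
  · exact (hw.le_solitonBound hm (abs_nonneg _) (abs_lt.2 (arctan_mem_Ioo _)) hMR
      (le_abs_self _) s hs).trans hMR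

theorem abs_le (hw : IsClampedSolitonSolution m R w (Ioo (-(π / 2)) (π / 2))) (hm : 0 < m)
    (hR : max (solitonBound m |arctan (w 0)|) |w 0| ≤ R) :
    ∀ s ∈ Ioo (-(π / 2)) (π / 2), |w s| ≤ R := by
  have hR₀ : 0 ≤ R := (abs_nonneg _).trans ((le_max_right _ _).trans hR)
  have hIco : Ico 0 (π / 2) ⊆ Ioo (-(π / 2)) (π / 2) := Ico_subset_Ioo_left (by linarith [pi_pos])
  intro s hs
  rcases le_total 0 s with h | h
  · exact (hw.mono hIco).abs_le_of_Ico hm hR s ⟨h, hs.2⟩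
  · simpa using ((hw.neg_comp_neg hR₀).mono hIco).abs_le_of_Ico hm
      (by simpa [arctan_neg] using hR) (-s) ⟨neg_nonneg.2 h, by linarith [hs.1]⟩

end IsClampedSolitonSolution

/-- Every solution of `w' = (1 + w²)(1 − (n−1)·tan(s)·w)` with initial
value `w(0) = w₀` extends to the whole interval `(−π/2, π/2)`. -/
theorem sphere_soliton_ODE_global_solution
    (n : ℕ) (hn : 2 ≤ n) :
    ∀ w₀ : ℝ, ∃ w : ℝ → ℝ,
      ContDiffOn ℝ 1 w (Set.Ioo (-(Real.pi / 2)) (Real.pi / 2)) ∧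
      w 0 = w₀ ∧
      ∀ s ∈ Set.Ioo (-(Real.pi / 2)) (Real.pi / 2),
        HasDerivAt w ((1 + w s ^ 2) * (1 - ((n : ℝ) - 1) * Real.tan s * w s)) s := by
  intro w₀
  have hm : (0 : ℝ) < n - 1 := by
    have : (2 : ℝ) ≤ n := by exact_mod_cast hn
    linarith
  set R := max (solitonBound (n - 1) |arctan w₀|) |w₀|
  obtain ⟨w, hw₀, hw⟩ := exists_isClampedSolitonSolution (n - 1) (R := R)
    ((abs_nonneg _).trans (le_max_right _ _)) w₀
  have hbound := hw.abs_le hm (by rw [hw₀])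
  have hsol : ∀ s ∈ Ioo (-(π / 2)) (π / 2), HasDerivAt w (solitonField (n - 1) s (w s)) s :=
    fun s hs => by simpa only [clamp_eq_self (hbound s hs)] using hw s hs
  exact ⟨w, contDiffOn_one_of_hasDerivAt isOpen_Ioo hsol
    (continuousOn_solitonField subset_rfl (HasDerivAt.continuousOn hsol)), hw₀, hsol⟩
end

section
/- Let I ⊆ ℝ be an open interval, let ε, ε̃ ∈ {1, −1} with ε·ε̃ = −1, and let h : I → ℝ be continuously differentiable. Then for every s₀ ∈ I, every f₀ ∈ ℝ, and every f₁ ∈ (−1, 1), there exists a twice continuously differentiable function f : I → ℝ satisfying f''(s) = (ε̃ + ε·(f'(s))²)·(1 − h(s)·f'(s)) for all s ∈ I, with f(s₀) = f₀ and f'(s₀) = f₁. -/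
/-!
Since `ε̃ = -ε`, the substitution `f' = tanh v` turns the equation into
`v' = ε (h tanh v - 1)`, and `f` is recovered from `f' = tanh v`. The right-hand side of this
first-order system for `(f, v)` is bounded and Lipschitz in `(f, v)`, with constants depending
continuously on time, so solutions cannot blow up: Picard–Lindelöf gives a solution on every
compact subinterval of `I`, and by uniqueness these glue to a solution on all of `I`.
-/

open Set Filter Topology NNReal

section GlobalExistence

variable {E : Type*} [NormedAddCommGroup E] [NormedSpace ℝ E] {F : ℝ → E → E} {I : Set ℝ}

theorem Set.OrdConnected.exists_Icc_subset_of_isOpen (hIc : I.OrdConnected) (hI : IsOpen I)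
    {x y : ℝ} (hx : x ∈ I) (hy : y ∈ I) :
    ∃ a b, Icc a b ⊆ I ∧ x ∈ Ioo a b ∧ y ∈ Ioo a b := by
  obtain ⟨r, hr, hrI⟩ := Metric.isOpen_iff.mp hI x hx
  obtain ⟨q, hq, hqI⟩ := Metric.isOpen_iff.mp hI y hy
  rw [Real.ball_eq_Ioo] at hrI hqI
  have haI : min (x - r / 2) (y - q / 2) ∈ I := by
    rcases min_choice (x - r / 2) (y - q / 2) with h | h <;> rw [h]
    exacts [hrI ⟨by linarith, by linarith⟩, hqI ⟨by linarith, by linarith⟩]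
  have hbI : max (x + r / 2) (y + q / 2) ∈ I := by
    rcases max_choice (x + r / 2) (y + q / 2) with h | h <;> rw [h]
    exacts [hrI ⟨by linarith, by linarith⟩, hqI ⟨by linarith, by linarith⟩]
  refine ⟨_, _, hIc.out haI hbI, ⟨?_, ?_⟩, ⟨?_, ?_⟩⟩
  · exact (min_le_left _ _).trans_lt (by linarith)
  · exact lt_of_lt_of_le (by linarith) (le_max_left _ _)
  · exact (min_le_right _ _).trans_lt (by linarith)
  · exact lt_of_lt_of_le (by linarith) (le_max_right _ _)

theorem exists_forall_mem_Ioo_hasDerivAt_of_lipschitzWith_of_norm_le [CompleteSpace E]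
    {a b t₀ : ℝ} (ht₀ : t₀ ∈ Icc a b) (x₀ : E) {K L : ℝ≥0}
    (hlip : ∀ t ∈ Icc a b, LipschitzWith K (F t)) (hcont : ∀ x, ContinuousOn (F · x) (Icc a b))
    (hbdd : ∀ t ∈ Icc a b, ∀ x, ‖F t x‖ ≤ L) :
    ∃ α : ℝ → E, α t₀ = x₀ ∧ ∀ t ∈ Ioo a b, HasDerivAt α (F t (α t)) t := by
  set r : ℝ≥0 := L * ⟨max (b - t₀) (t₀ - a), le_max_of_le_left (sub_nonneg.2 ht₀.2)⟩
  have hPL : IsPicardLindelof F (tmin := a) (tmax := b) ⟨t₀, ht₀⟩ x₀ r 0 L K :=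
    { lipschitzOnWith := fun t ht => (hlip t ht).lipschitzOnWith
      continuousOn := fun x _ => hcont x
      norm_le := fun t ht x _ => hbdd t ht x
      mul_max_le := by simp only [NNReal.coe_zero, sub_zero]; rfl }
  obtain ⟨α, hα₀, hα⟩ := hPL.exists_eq_forall_mem_Icc_hasDerivWithinAt₀
  exact ⟨α, hα₀, fun t ht => (hα t (Ioo_subset_Icc_self ht)).hasDerivAt (Icc_mem_nhds ht.1 ht.2)⟩

theorem eqOn_Ioo_inter_Ioo_of_hasDerivAt {K : ℝ → ℝ≥0}
    (hlip : ∀ t ∈ I, LipschitzWith (K t) (F t)) (hK : ContinuousOn K I)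
    {a₁ b₁ a₂ b₂ t₀ : ℝ} (hI₁ : Icc a₁ b₁ ⊆ I) (ht₁ : t₀ ∈ Ioo a₁ b₁) (ht₂ : t₀ ∈ Ioo a₂ b₂)
    {α β : ℝ → E} (hα : ∀ t ∈ Ioo a₁ b₁, HasDerivAt α (F t (α t)) t)
    (hβ : ∀ t ∈ Ioo a₂ b₂, HasDerivAt β (F t (β t)) t) (heq : α t₀ = β t₀) :
    EqOn α β (Ioo a₁ b₁ ∩ Ioo a₂ b₂) := by
  obtain ⟨C, hC⟩ := isCompact_Icc.bddAbove_image (hK.mono hI₁)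
  have h₁ : Ioo (max a₁ a₂) (min b₁ b₂) ⊆ Ioo a₁ b₁ :=
    Ioo_subset_Ioo (le_max_left _ _) (min_le_left _ _)
  have h₂ : Ioo (max a₁ a₂) (min b₁ b₂) ⊆ Ioo a₂ b₂ :=
    Ioo_subset_Ioo (le_max_right _ _) (min_le_right _ _)
  rw [Ioo_inter_Ioo]
  refine ODE_solution_unique_of_mem_Ioo (s := fun _ => univ) (K := C) (fun t ht => ?_)
    ⟨max_lt ht₁.1 ht₂.1, lt_min ht₁.2 ht₂.2⟩ (fun t ht => ⟨hα t (h₁ ht), trivial⟩)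
    (fun t ht => ⟨hβ t (h₂ ht), trivial⟩) heq
  have ht' := Ioo_subset_Icc_self (h₁ ht)
  exact ((hlip t (hI₁ ht')).weaken (hC (mem_image_of_mem K ht'))).lipschitzOnWith

theorem IsOpen.exists_forall_mem_hasDerivAt_of_lipschitzWith_of_norm_le [CompleteSpace E]
    (hI : IsOpen I) (hIc : I.OrdConnected) {K : ℝ → ℝ≥0} {L : ℝ → ℝ}
    (hlip : ∀ t ∈ I, LipschitzWith (K t) (F t)) (hK : ContinuousOn K I)
    (hbdd : ∀ t ∈ I, ∀ x, ‖F t x‖ ≤ L t) (hL : ContinuousOn L I)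
    (hcont : ∀ x, ContinuousOn (F · x) I) {t₀ : ℝ} (ht₀ : t₀ ∈ I) (x₀ : E) :
    ∃ α : ℝ → E, α t₀ = x₀ ∧ ∀ t ∈ I, HasDerivAt α (F t (α t)) t := by
  have hloc : ∀ t ∈ I, ∃ a b, ∃ α : ℝ → E, Icc a b ⊆ I ∧ t ∈ Ioo a b ∧ t₀ ∈ Ioo a b ∧
      α t₀ = x₀ ∧ ∀ τ ∈ Ioo a b, HasDerivAt α (F τ (α τ)) τ := by
    intro t ht
    obtain ⟨a, b, hab, hta, ht₀ab⟩ := hIc.exists_Icc_subset_of_isOpen hI ht ht₀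
    obtain ⟨CK, hCK⟩ := isCompact_Icc.bddAbove_image (hK.mono hab)
    obtain ⟨CL, hCL⟩ := isCompact_Icc.bddAbove_image (hL.mono hab)
    obtain ⟨α, hα₀, hα⟩ := exists_forall_mem_Ioo_hasDerivAt_of_lipschitzWith_of_norm_le
      (Ioo_subset_Icc_self ht₀ab) x₀ (K := CK) (L := CL.toNNReal)
      (fun τ hτ => (hlip τ (hab hτ)).weaken (hCK (mem_image_of_mem K hτ)))
      (fun x => (hcont x).mono hab)
      (fun τ hτ x => (hbdd τ (hab hτ) x).trans
        ((hCL (mem_image_of_mem L hτ)).trans (Real.le_coe_toNNReal CL)))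
    exact ⟨a, b, α, hab, hta, ht₀ab, hα₀, hα⟩
  choose a b α hab hta ht₀ab hα₀ hα using hloc
  have hagree : ∀ t (ht : t ∈ I), ∀ τ (hτ : τ ∈ Ioo (a t ht) (b t ht)),
      α τ (hab t ht (Ioo_subset_Icc_self hτ)) τ = α t ht τ := fun t ht τ hτ =>
    have hτI := hab t ht (Ioo_subset_Icc_self hτ)
    eqOn_Ioo_inter_Ioo_of_hasDerivAt hlip hK (hab τ hτI) (ht₀ab τ hτI) (ht₀ab t ht) (hα τ hτI)
      (hα t ht) ((hα₀ τ hτI).trans (hα₀ t ht).symm) ⟨hta τ hτI, hτ⟩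
  classical
  refine ⟨fun t => if ht : t ∈ I then α t ht t else x₀, by simp [ht₀, hα₀], fun t ht => ?_⟩
  have hev : (fun τ => if hτ : τ ∈ I then α τ hτ τ else x₀) =ᶠ[𝓝 t] α t ht := by
    filter_upwards [Ioo_mem_nhds (hta t ht).1 (hta t ht).2] with τ hτ
    rw [dif_pos (hab t ht (Ioo_subset_Icc_self hτ))]
    exact hagree t ht τ hτ
  have hderiv := (hα t ht t (hta t ht)).congr_of_eventuallyEq hev
  rwa [← hev.eq_of_nhds] at hderiv

end GlobalExistence

section SecondDerivative

variable {𝕜 E : Type*} [NontriviallyNormedField 𝕜] [NormedAddCommGroup E] [NormedSpace 𝕜 E]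
  {I : Set 𝕜} {f f' f'' : 𝕜 → E}

theorem contDiffOn_two_of_hasDerivAt (hI : IsOpen I) (hf : ∀ s ∈ I, HasDerivAt f (f' s) s)
    (hf' : ∀ s ∈ I, HasDerivAt f' (f'' s) s) (hf'' : ContinuousOn f'' I) :
    ContDiffOn 𝕜 2 f I := by
  rw [show (2 : WithTop ℕ∞) = 1 + 1 by norm_num, contDiffOn_succ_iff_deriv_of_isOpen hI]
  refine ⟨fun s hs => (hf s hs).differentiableAt.differentiableWithinAt, by simp,
    ContDiffOn.congr ?_ fun s hs => (hf s hs).deriv⟩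
  rw [show (1 : WithTop ℕ∞) = 0 + 1 by norm_num, contDiffOn_succ_iff_deriv_of_isOpen hI]
  exact ⟨fun s hs => (hf' s hs).differentiableAt.differentiableWithinAt, by simp,
    contDiffOn_zero.2 (hf''.congr fun s hs => (hf' s hs).deriv)⟩

theorem deriv_deriv_eq_of_hasDerivAt (hI : IsOpen I) (hf : ∀ s ∈ I, HasDerivAt f (f' s) s)
    {s : 𝕜} {y : E} (hf' : HasDerivAt f' y s) (hs : s ∈ I) : deriv (deriv f) s = y := by
  have hderiv : deriv f =ᶠ[𝓝 s] f' :=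
    Filter.eventually_of_mem (hI.mem_nhds hs) fun τ hτ => (hf τ hτ).deriv
  rw [hderiv.deriv_eq, hf'.deriv]

end SecondDerivative

namespace Real

theorem hasDerivAt_tanh (x : ℝ) : HasDerivAt tanh (1 - tanh x ^ 2) x := by
  have hcosh : cosh x ≠ 0 := (cosh_pos x).ne'
  have hquot : HasDerivAt (fun y => sinh y / cosh y) _ x :=
    (hasDerivAt_sinh x).div (hasDerivAt_cosh x) hcosh
  rw [← funext tanh_eq_sinh_div_cosh] at hquot
  refine hquot.congr_deriv ?_
  rw [tanh_eq_sinh_div_cosh]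
  field_simp

theorem lipschitzWith_tanh : LipschitzWith 1 tanh := by
  refine lipschitzWith_of_nnnorm_deriv_le (fun x => (hasDerivAt_tanh x).differentiableAt)
    fun x => ?_
  rw [(hasDerivAt_tanh x).deriv, ← NNReal.coe_le_coe, coe_nnnorm, Real.norm_eq_abs,
    NNReal.coe_one, abs_le]
  constructor <;> nlinarith [tanh_sq_lt_one x, sq_nonneg (tanh x)]

end Real

open Real

noncomputable def solitonVectorField (ε : ℝ) (h : ℝ → ℝ) (t : ℝ) (p : ℝ × ℝ) : ℝ × ℝ :=
  (tanh p.2, ε * (h t * tanh p.2 - 1))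

theorem lipschitzWith_solitonVectorField (ε : ℝ) (h : ℝ → ℝ) (t : ℝ) :
    LipschitzWith (max 1 ‖ε * h t‖₊) (solitonVectorField ε h t) := by
  have hsecond : LipschitzWith ‖ε * h t‖₊ fun y => ε * (h t * tanh y - 1) := by
    have hlin := ((lipschitzWith_smul (ε * h t)).comp lipschitzWith_tanh).sub
      (LipschitzWith.const (α := ℝ) ε)
    simpa [Function.comp_def, mul_sub, mul_assoc] using hlin
  have hfield :=
    (lipschitzWith_tanh.prodMk hsecond).comp (LipschitzWith.prod_snd (α := ℝ) (β := ℝ))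
  rwa [mul_one] at hfield

theorem norm_solitonVectorField_le (ε : ℝ) (h : ℝ → ℝ) (t : ℝ) (p : ℝ × ℝ) :
    ‖solitonVectorField ε h t p‖ ≤ 1 + ‖ε‖ * (‖h t‖ + 1) := by
  have htanh : ‖tanh p.2‖ ≤ 1 := (abs_tanh_lt_one _).le
  have hinner : ‖h t * tanh p.2 - 1‖ ≤ ‖h t‖ + 1 :=
    calc ‖h t * tanh p.2 - 1‖ ≤ ‖h t * tanh p.2‖ + ‖(1 : ℝ)‖ := norm_sub_le _ _
      _ ≤ ‖h t‖ + 1 := by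
        rw [norm_mul, norm_one]
        gcongr
        exact mul_le_of_le_one_right (norm_nonneg _) htanh
  refine norm_prod_le_iff.2 ⟨htanh.trans (le_add_of_nonneg_right (by positivity)), ?_⟩
  rw [solitonVectorField, norm_mul]
  exact (mul_le_mul_of_nonneg_left hinner (norm_nonneg ε)).trans
    (le_add_of_nonneg_left zero_le_one)

section Solution

variable {ε : ℝ} {h : ℝ → ℝ} {γ : ℝ → ℝ × ℝ} {s : ℝ}

theorem hasDerivAt_fst_of_solitonVectorField
    (hγ : HasDerivAt γ (solitonVectorField ε h s (γ s)) s) :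
    HasDerivAt (fun τ => (γ τ).1) (tanh (γ s).2) s :=
  (hasFDerivAt_fst (𝕜 := ℝ) (p := γ s)).comp_hasDerivAt s hγ

theorem hasDerivAt_tanh_snd_of_solitonVectorField
    (hγ : HasDerivAt γ (solitonVectorField ε h s (γ s)) s) :
    HasDerivAt (fun τ => tanh (γ τ).2)
      ((-ε + ε * tanh (γ s).2 ^ 2) * (1 - h s * tanh (γ s).2)) s := by
  have hsnd : HasDerivAt (fun τ => (γ τ).2) (ε * (h s * tanh (γ s).2 - 1)) s :=
    (hasFDerivAt_snd (𝕜 := ℝ) (p := γ s)).comp_hasDerivAt s hγ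
  exact ((hasDerivAt_tanh _).comp s hsnd).congr_deriv (by ring)

end Solution

theorem global_existence_mixed_signs_general
    (I : Set ℝ) (hIopen : IsOpen I) (hIconn : I.OrdConnected)
    (ε ε' : ℝ) (hε : ε = 1 ∨ ε = -1)
    (hmix : ε * ε' = -1)
    (h : ℝ → ℝ) (hC1 : ContDiffOn ℝ 1 h I) :
    ∀ s₀ ∈ I, ∀ f₀ : ℝ, ∀ f₁ ∈ Set.Ioo (-1 : ℝ) 1,
      ∃ f : ℝ → ℝ,
        ContDiffOn ℝ 2 f I ∧
        (∀ s ∈ I, deriv (deriv f) s =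
          (ε' + ε * (deriv f s) ^ 2) * (1 - h s * deriv f s)) ∧
        f s₀ = f₀ ∧ deriv f s₀ = f₁ := by
  intro s₀ hs₀ f₀ f₁ hf₁
  have hε' : ε' = -ε := by rcases hε with rfl | rfl <;> linarith
  have hh : ContinuousOn h I := hC1.continuousOn
  obtain ⟨γ, hγ₀, hγ⟩ := hIopen.exists_forall_mem_hasDerivAt_of_lipschitzWith_of_norm_le hIconn
    (fun t _ => lipschitzWith_solitonVectorField ε h t) (by fun_prop)
    (fun t _ => norm_solitonVectorField_le ε h t) (by fun_prop)
    (fun p => by unfold solitonVectorField; fun_prop) hs₀ (f₀, artanh f₁)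
  have hf := fun s hs => hasDerivAt_fst_of_solitonVectorField (hγ s hs)
  have hf' := fun s hs => hasDerivAt_tanh_snd_of_solitonVectorField (hγ s hs)
  have hg : ContinuousOn (fun s => tanh (γ s).2) I := HasDerivAt.continuousOn hf'
  refine ⟨fun s => (γ s).1, contDiffOn_two_of_hasDerivAt hIopen hf hf' (by fun_prop),
    fun s hs => ?_, by simp [hγ₀], ?_⟩
  · rw [deriv_deriv_eq_of_hasDerivAt hIopen hf (hf' s hs) hs, (hf s hs).deriv, hε']
  · rw [(hf s₀ hs₀).deriv, hγ₀, tanh_artanh hf₁]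

/-- In the case `ε·ε̃ = −1`, the translating soliton ODE
`f'' = (ε̃ + ε (f')²)(1 − h f')` has a globally defined solution on the whole open
interval `I` for every initial data `f(s₀) = f₀`, `f'(s₀) = f₁ ∈ (−1, 1)`. -/
theorem global_existence_mixed_signs
    (I : Set ℝ) (hIopen : IsOpen I) (hIconn : I.OrdConnected)
    (ε ε' : ℝ) (hε : ε = 1 ∨ ε = -1) (hε' : ε' = 1 ∨ ε' = -1)
    (hmix : ε * ε' = -1)
    (h : ℝ → ℝ) (hC1 : ContDiffOn ℝ 1 h I) :
    ∀ s₀ ∈ I, ∀ f₀ : ℝ, ∀ f₁ ∈ Set.Ioo (-1 : ℝ) 1,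
      ∃ f : ℝ → ℝ,
        ContDiffOn ℝ 2 f I ∧
        (∀ s ∈ I, deriv (deriv f) s =
          (ε' + ε * (deriv f s) ^ 2) * (1 - h s * deriv f s)) ∧
        f s₀ = f₀ ∧ deriv f s₀ = f₁ :=
  global_existence_mixed_signs_general I hIopen hIconn ε ε' hε hmix h hC1
end

section
/- Let I ⊆ ℝ be an open interval, let h : I → ℝ be continuous, let c ∈ I and λ > 0, and set a = c + 1/λ. Assume h(s) > 0 for every s ∈ I with s ≥ c, and that sup I > a. Then there is no twice continuously differentiable function f : [c, a] → ℝ satisfying f''(s) = −(1 + (f'(s))²)·(1 − h(s)·f'(s)) for all s ∈ [c, a] with f'(c) = −λ; that is, every such solution blows up before a. -/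
/-! Write `g = f'`. Where `g ≤ 0` and `h > 0` the equation gives `g' ≤ -(1 + g²)`, so `g` can never
climb back to its initial value `-λ` and stays below it on `[c, a]`. Then `g' ≤ -g²` makes `1/g`
grow at least linearly: `1/g(s) ≥ -1/λ + (s - c)`, which vanishes at `s = a`, contradicting
`g(a) < 0`. -/

open Set

section Comparison

variable {g g' : ℝ → ℝ} {c a : ℝ}

lemma HasDerivWithinAt.Ici_of_Icc {d s : ℝ} (hs : s ∈ Ico c a)
    (hg : HasDerivWithinAt g d (Icc c a) s) : HasDerivWithinAt g d (Ici s) s :=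
  hg.mono_of_mem_nhdsWithin (Icc_mem_nhdsGE_of_mem hs)

lemma continuousOn_of_hasDerivWithinAt_Icc
    (hg : ∀ s ∈ Icc c a, HasDerivWithinAt g (g' s) (Icc c a) s) : ContinuousOn g (Icc c a) :=
  fun s hs ↦ (hg s hs).continuousWithinAt

lemma le_of_deriv_neg_of_eq {B : ℝ}
    (hg : ∀ s ∈ Icc c a, HasDerivWithinAt g (g' s) (Icc c a) s) (hc : g c ≤ B)
    (hB : ∀ s ∈ Ico c a, g s = B → g' s < 0) : ∀ s ∈ Icc c a, g s ≤ B :=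
  fun _ hs ↦ image_le_of_deriv_right_lt_deriv_boundary (continuousOn_of_hasDerivWithinAt_Icc hg)
    (fun s hs ↦ (hg s (Ico_subset_Icc_self hs)).Ici_of_Icc hs) hc
    (fun _ ↦ hasDerivAt_const _ B) hB hs

lemma inv_add_sub_le_inv_of_deriv_le_neg_sq
    (hg : ∀ s ∈ Icc c a, HasDerivWithinAt g (g' s) (Icc c a) s)
    (hneg : ∀ s ∈ Icc c a, g s < 0) (hric : ∀ s ∈ Ico c a, g' s ≤ -g s ^ 2) :
    ∀ s ∈ Icc c a, (g c)⁻¹ + (s - c) ≤ (g s)⁻¹ := by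
  have hinv : ∀ s ∈ Icc c a, HasDerivWithinAt g⁻¹ (-g' s / g s ^ 2) (Icc c a) s :=
    fun s hs ↦ (hg s hs).inv (hneg s hs).ne
  refine fun _ hs ↦ image_le_of_deriv_right_le_deriv_boundary
    (f' := fun _ ↦ 1) (by fun_prop)
    (fun s _ ↦ ((hasDerivAt_id s).sub_const c).const_add _ |>.hasDerivWithinAt)
    (by simp) (continuousOn_of_hasDerivWithinAt_Icc hinv)
    (fun s hs ↦ (hinv s (Ico_subset_Icc_self hs)).Ici_of_Icc hs) (fun s hs ↦ ?_) hs
  have hsq : 0 < g s ^ 2 := by nlinarith [hneg s (Ico_subset_Icc_self hs)]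
  rw [le_div_iff₀ hsq]
  linarith [hric s hs]

end Comparison

lemma neg_one_add_sq_mul_one_sub_mul_le {η x : ℝ} (hη : 0 < η) (hx : x ≤ 0) :
    -((1 + x ^ 2) * (1 - η * x)) ≤ -(1 + x ^ 2) :=
  neg_le_neg <| le_mul_of_one_le_right (by positivity) (by nlinarith)

theorem blow_up_case_eps_neg_one_epstilde_neg_one_general
    (I : Set ℝ) (hIconn : I.OrdConnected)
    (h : ℝ → ℝ)
    (c : ℝ) (hc : c ∈ I) (l : ℝ) (hl : 0 < l)
    (a : ℝ) (ha : a = c + 1 / l)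
    (hpos : ∀ s ∈ I, c ≤ s → 0 < h s)
    (hsup : ∃ s ∈ I, a < s) :
    ¬ ∃ f : ℝ → ℝ,
      ContDiffOn ℝ 2 f (Set.Icc c a) ∧
      (∀ s ∈ Set.Icc c a,
        derivWithin (derivWithin f (Set.Icc c a)) (Set.Icc c a) s =
          -((1 + (derivWithin f (Set.Icc c a) s) ^ 2) *
            (1 - h s * derivWithin f (Set.Icc c a) s))) ∧
      derivWithin f (Set.Icc c a) c = -l := by
  rintro ⟨f, hf, hode, hfc⟩
  set g := derivWithin f (Icc c a)
  have hca : c < a := by rw [ha]; linarith [one_div_pos.mpr hl]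
  have hIcc : Icc c a ⊆ I := by
    obtain ⟨s, hsI, has⟩ := hsup
    exact (Icc_subset_Icc_right has.le).trans (hIconn.out hc hsI)
  have hg : ∀ s ∈ Icc c a,
      HasDerivWithinAt g (-((1 + g s ^ 2) * (1 - h s * g s))) (Icc c a) s := fun s hs ↦ by
    rw [← hode s hs]
    exact ((hf.derivWithin (uniqueDiffOn_Icc hca) le_rfl).differentiableOn
      one_ne_zero s hs).hasDerivWithinAt
  have hdecay : ∀ s ∈ Icc c a, g s ≤ 0 → -((1 + g s ^ 2) * (1 - h s * g s)) ≤ -(1 + g s ^ 2) :=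
    fun s hs ↦ neg_one_add_sq_mul_one_sub_mul_le (hpos s (hIcc hs) hs.1)
  have hle : ∀ s ∈ Icc c a, g s ≤ -l := by
    refine le_of_deriv_neg_of_eq hg hfc.le fun s hs hgs ↦ ?_
    linarith [hdecay s (Ico_subset_Icc_self hs) (by linarith), sq_nonneg (g s)]
  have hneg : ∀ s ∈ Icc c a, g s < 0 := fun s hs ↦ (hle s hs).trans_lt (neg_lt_zero.mpr hl)
  have hric : ∀ s ∈ Ico c a, -((1 + g s ^ 2) * (1 - h s * g s)) ≤ -g s ^ 2 := fun s hs ↦ by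
    linarith [hdecay s (Ico_subset_Icc_self hs) (hneg s (Ico_subset_Icc_self hs)).le]
  have ha_mem : a ∈ Icc c a := right_mem_Icc.mpr hca.le
  have hinv := inv_add_sub_le_inv_of_deriv_le_neg_sq hg hneg hric a ha_mem
  have hac : a - c = 1 / l := by rw [ha]; ring
  rw [hfc, hac, inv_neg, ← one_div] at hinv
  linarith [inv_lt_zero.mpr (hneg a ha_mem)]

/-- Finite time blow up for `f'' = −(1 + (f')²)(1 − h f')` with
`f'(c) = −λ`, `λ > 0` and `h > 0` on `I ∩ [c, ∞)`: no `C²` solution exists on all of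
`[c, a]` where `a = c + 1/λ`. -/
theorem blow_up_case_eps_neg_one_epstilde_neg_one
    (I : Set ℝ) (hIopen : IsOpen I) (hIconn : I.OrdConnected)
    (h : ℝ → ℝ) (hcont : ContinuousOn h I)
    (c : ℝ) (hc : c ∈ I) (l : ℝ) (hl : 0 < l)
    (a : ℝ) (ha : a = c + 1 / l)
    (hpos : ∀ s ∈ I, c ≤ s → 0 < h s)
    (hsup : ∃ s ∈ I, a < s) :
    ¬ ∃ f : ℝ → ℝ,
      ContDiffOn ℝ 2 f (Set.Icc c a) ∧
      (∀ s ∈ Set.Icc c a,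
        derivWithin (derivWithin f (Set.Icc c a)) (Set.Icc c a) s =
          -((1 + (derivWithin f (Set.Icc c a) s) ^ 2) *
            (1 - h s * derivWithin f (Set.Icc c a) s))) ∧
      derivWithin f (Set.Icc c a) c = -l :=
  blow_up_case_eps_neg_one_epstilde_neg_one_general I hIconn h c hc l hl a ha hpos hsup
end
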